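/- arXiv:2112.01498 — 8 statements merged into one kernel-verified Lean document; each statement's English description precedes it below -/
import Mathlib

section
/- Covariance of (n,k;α)-U(1) codes (Proposition 1): let k, m, α be natural numbers and set n = k + m. On the index type (Fin k → Bool) × (Fin m → Bool) let Q := Matrix.diagonal (fun p => ((wt p.1 + wt p.2 : ℕ) : ℂ)) be the total Hamming-weight operator, and for θ : ℝ let D θ := Matrix.diagonal (fun p => Complex.exp (Complex.I * θ * (wt p.1 + wt p.2))) and Dk θ := Matrix.diagonal (fun x : Fin k → Bool => Complex.exp (Complex.I * θ * wt x)). Suppose U ∈ Matrix.unitaryGroup ((Fin k → Bool) × (Fin m → Bool)) ℂ satisfies ↑U * Q = Q * ↑U, and ψ : (Fin m → Bool) → ℂ satisfies ψ f = 0 whenever wt f ≠ α. Then for every θ : ℝ and every ρ : Matrix (Fin k → Bool) (Fin k → Bool) ℂ, D θ * (↑U * (ρ ⊗ₖ Ψ) * (↑U)ᴴ) * (D θ)ᴴ = ↑U * ((Dk θ * ρ * (Dk θ)ᴴ) ⊗ₖ Ψ) * (↑U)ᴴ, where Ψ : Matrix (Fin m → Bool) (Fin m → Bool) ℂ is the rank-one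 matrix Ψ f g = ψ f * star (ψ g). -/
open Matrix Kronecker

/-- The Hamming weight of a basis state of `m` qubits. -/
def wt {m : ℕ} (f : Fin m → Bool) : ℕ := (Finset.univ.filter (fun i => f i = true)).card

/-- The total Hamming-weight (charge) operator on `k + m` qubits. -/
noncomputable def Qtot (k m : ℕ) :
    Matrix ((Fin k → Bool) × (Fin m → Bool)) ((Fin k → Bool) × (Fin m → Bool)) ℂ :=
  Matrix.diagonal (fun p => ((wt p.1 + wt p.2 : ℕ) : ℂ))

/-- The physical `U(1)` group action `e^{-iθT}` on `k + m` qubits. -/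
noncomputable def D (k m : ℕ) (θ : ℝ) :
    Matrix ((Fin k → Bool) × (Fin m → Bool)) ((Fin k → Bool) × (Fin m → Bool)) ℂ :=
  Matrix.diagonal (fun p => Complex.exp (Complex.I * (θ : ℂ) * ((wt p.1 + wt p.2 : ℕ) : ℂ)))

/-- The logical `U(1)` group action on `k` qubits. -/
noncomputable def Dk (k : ℕ) (θ : ℝ) : Matrix (Fin k → Bool) (Fin k → Bool) ℂ :=
  Matrix.diagonal (fun x : Fin k → Bool => Complex.exp (Complex.I * (θ : ℂ) * ((wt x : ℕ) : ℂ)))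

/-!
Since `U` commutes with the charge `Q`, it commutes with every function of `Q`, in particular
with `D θ = exp (iθQ)`. The charge is additive over the two registers, so `D k m θ = Dk k θ ⊗ Dk m θ`;
the ancilla `ψ` is an eigenvector of `Dk m θ` with eigenvalue `exp (iθα)` of modulus one, so
conjugation by `Dk m θ` fixes `Ψ = ψψ†`.
-/

namespace Matrix

variable {ι R : Type*} [Fintype ι] [DecidableEq ι]

theorem apply_eq_zero_of_commute_diagonal [CommRing R] [NoZeroDivisors R] {A : Matrix ι ι R}
    {d : ι → R} (h : Commute A (diagonal d)) {i j : ι} (hij : d i ≠ d j) : A i j = 0 := by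
  have hij' : A i j * d j = d i * A i j := by
    simpa only [mul_diagonal, diagonal_mul] using congrFun (congrFun h.eq i) j
  have : (d j - d i) * A i j = 0 := by linear_combination hij'
  exact (mul_eq_zero.mp this).resolve_left (sub_ne_zero.mpr hij.symm)

theorem commute_diagonal_comp [CommRing R] [NoZeroDivisors R] {A : Matrix ι ι R} {d : ι → R}
    (h : Commute A (diagonal d)) (f : R → R) : Commute A (diagonal (f ∘ d)) := by
  ext i j
  simp only [mul_diagonal, diagonal_mul, Function.comp_apply]
  by_cases hij : d i = d j
  · rw [hij, mul_comm]
  · simp [apply_eq_zero_of_commute_diagonal h hij]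

end Matrix

theorem Complex.exp_I_mul_ofReal_mul_star_self (x : ℝ) :
    Complex.exp (Complex.I * x) * star (Complex.exp (Complex.I * x)) = 1 := by
  rw [mul_comm Complex.I, Complex.star_def, Complex.mul_conj, Complex.normSq_eq_norm_sq,
    Complex.norm_exp_ofReal_mul_I]
  norm_num

theorem D_eq_Dk_kronecker_Dk (k m : ℕ) (θ : ℝ) : D k m θ = Dk k θ ⊗ₖ Dk m θ := by
  rw [D, Dk, Dk, diagonal_kronecker_diagonal]
  congr 1
  ext p
  rw [← Complex.exp_add]
  push_cast
  ring_nf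

theorem commute_D_of_commute_Qtot {k m : ℕ}
    {U : Matrix ((Fin k → Bool) × (Fin m → Bool)) ((Fin k → Bool) × (Fin m → Bool)) ℂ}
    (h : Commute U (Qtot k m)) (θ : ℝ) : Commute U (D k m θ) :=
  commute_diagonal_comp h fun z => Complex.exp (Complex.I * θ * z)

theorem Dk_mulVec_of_wt_eq {m α : ℕ} {ψ : (Fin m → Bool) → ℂ} (hψ : ∀ f, wt f ≠ α → ψ f = 0)
    (θ : ℝ) : Dk m θ *ᵥ ψ = Complex.exp (Complex.I * θ * α) • ψ := by
  ext f
  rw [Dk, mulVec_diagonal, Pi.smul_apply, smul_eq_mul]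
  by_cases hf : wt f = α
  · rw [hf]
  · simp [hψ f hf]

theorem Dk_mul_vecMulVec_mul_conjTranspose_of_wt_eq {m α : ℕ} {ψ : (Fin m → Bool) → ℂ}
    (hψ : ∀ f, wt f ≠ α → ψ f = 0) (θ : ℝ) :
    Dk m θ * vecMulVec ψ (star ψ) * (Dk m θ)ᴴ = vecMulVec ψ (star ψ) := by
  have hphase : Complex.exp (Complex.I * θ * α) * star (Complex.exp (Complex.I * θ * α)) = 1 := by
    simpa [mul_assoc] using Complex.exp_I_mul_ofReal_mul_star_self (θ * α)
  rw [mul_vecMulVec, vecMulVec_mul, ← star_mulVec, Dk_mulVec_of_wt_eq hψ, star_smul,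
    smul_vecMulVec, vecMulVec_smul, smul_smul, hphase, one_smul]

/-- **Covariance of (n,k;α)-U(1) codes** (Proposition 1): if a unitary `U` on `n = k + m` qubits
commutes with the total Hamming-weight operator and the ancilla state `ψ` has definite Hamming
weight `α`, then the encoding `ρ ↦ U (ρ ⊗ Ψ) U†` is covariant with respect to the `U(1)` actions
generated by the Hamming-weight charge operators. -/
theorem u1_code_covariant (k m α : ℕ)
    (U : Matrix.unitaryGroup ((Fin k → Bool) × (Fin m → Bool)) ℂ)
    (hUQ : (U : Matrix ((Fin k → Bool) × (Fin m → Bool)) ((Fin k → Bool) × (Fin m → Bool)) ℂ) *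
      Qtot k m = Qtot k m * (U : Matrix _ _ ℂ))
    (ψ : (Fin m → Bool) → ℂ) (hψ : ∀ f, wt f ≠ α → ψ f = 0)
    (Ψ : Matrix (Fin m → Bool) (Fin m → Bool) ℂ)
    (hΨ : ∀ f g, Ψ f g = ψ f * star (ψ g))
    (θ : ℝ) (ρ : Matrix (Fin k → Bool) (Fin k → Bool) ℂ) :
    D k m θ * ((U : Matrix _ _ ℂ) * (ρ ⊗ₖ Ψ) * (U : Matrix _ _ ℂ)ᴴ) * (D k m θ)ᴴ =
      (U : Matrix _ _ ℂ) * ((Dk k θ * ρ * (Dk k θ)ᴴ) ⊗ₖ Ψ) * (U : Matrix _ _ ℂ)ᴴ := by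
  have hΨ' : Ψ = vecMulVec ψ (star ψ) := ext hΨ
  have hUD : Commute (U : Matrix _ _ ℂ) (D k m θ) := commute_D_of_commute_Qtot hUQ θ
  have hUD_star : Commute (U : Matrix _ _ ℂ)ᴴ (D k m θ)ᴴ := hUD.star_star
  calc D k m θ * ((U : Matrix _ _ ℂ) * (ρ ⊗ₖ Ψ) * (U : Matrix _ _ ℂ)ᴴ) * (D k m θ)ᴴ
      = (U : Matrix _ _ ℂ) * (D k m θ * (ρ ⊗ₖ Ψ) * (D k m θ)ᴴ) * (U : Matrix _ _ ℂ)ᴴ := by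
        simp only [← Matrix.mul_assoc, hUD.eq]
        simp only [Matrix.mul_assoc, hUD_star.eq]
    _ = (U : Matrix _ _ ℂ) * ((Dk k θ * ρ * (Dk k θ)ᴴ) ⊗ₖ (Dk m θ * Ψ * (Dk m θ)ᴴ)) *
          (U : Matrix _ _ ℂ)ᴴ := by
        rw [D_eq_Dk_kronecker_Dk, conjTranspose_kronecker, mul_kronecker_mul, mul_kronecker_mul]
    _ = _ := by rw [hΨ', Dk_mul_vecMulVec_mul_conjTranspose_of_wt_eq hψ]
end

section
/- Haar averaging over SU(d)-symmetric unitaries equals symmetric-group averaging (Lemma D.1, 'lem:avg'): let d ≥ 1 and n ≥ 1, let G be the subgroup of Matrix.unitaryGroup (Fin n → Fin d) ℂ consisting of all V such that ↑V * tp n ↑W = tp n ↑W * ↑V for every W ∈ Matrix.unitaryGroup (Fin d) ℂ, and let μ be a bi-invariant probability measure on G. Then for every M : Matrix (Fin n → Fin d) (Fin n → Fin d) ℂ, ∫ V, ↑V * M * (↑V)ᴴ ∂μ = ((n)! : ℂ)⁻¹ • ∑ π : Equiv.Perm (Fin n), O π * M * (O π)ᴴ. -/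
open Matrix Kronecker MeasureTheory

/-- Entrywise (Borel) measurable structure on complex matrices. -/
noncomputable instance matrixMeasurableSpace {m n : Type*} : MeasurableSpace (Matrix m n ℂ) :=
  inferInstanceAs (MeasurableSpace (m → n → ℂ))

/-- The `m`-fold tensor power of a `d × d` matrix, acting on `m` qudits. -/
def tp {d : ℕ} (m : ℕ) (W : Matrix (Fin d) (Fin d) ℂ) :
    Matrix (Fin m → Fin d) (Fin m → Fin d) ℂ :=
  Matrix.of fun f g => ∏ i, W (f i) (g i)

/-- The permutation operator on `n` qudits associated to `π : S_n`. -/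
def permOp {d n : ℕ} (π : Equiv.Perm (Fin n)) :
    Matrix (Fin n → Fin d) (Fin n → Fin d) ℂ :=
  Matrix.of fun f g => if g = f ∘ π then 1 else 0

/-- The subgroup of the unitary group on `n` qudits consisting of the unitaries commuting with
every collective unitary `W^{⊗n}`, i.e. the `SU(d)`-symmetric unitaries. -/
def sudSymmetricGroup (d n : ℕ) : Subgroup (Matrix.unitaryGroup (Fin n → Fin d) ℂ) where
  carrier := {V | ∀ W ∈ Matrix.unitaryGroup (Fin d) ℂ,
    (V : Matrix (Fin n → Fin d) (Fin n → Fin d) ℂ) * tp n W = tp n W * (V : Matrix _ _ ℂ)}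
  one_mem' := by intro W _; simp
  mul_mem' := by
    intro a b ha hb W hW
    have hab : ((a * b : Matrix.unitaryGroup (Fin n → Fin d) ℂ) :
        Matrix (Fin n → Fin d) (Fin n → Fin d) ℂ) = (a : Matrix _ _ ℂ) * (b : Matrix _ _ ℂ) := rfl
    rw [hab, mul_assoc, hb W hW, ← mul_assoc, ha W hW, mul_assoc]
  inv_mem' := by
    intro a ha W hW
    set A : Matrix (Fin n → Fin d) (Fin n → Fin d) ℂ :=
      ((a : Matrix.unitaryGroup (Fin n → Fin d) ℂ) : Matrix (Fin n → Fin d) (Fin n → Fin d) ℂ)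
      with hA
    set B : Matrix (Fin n → Fin d) (Fin n → Fin d) ℂ :=
      ((a⁻¹ : Matrix.unitaryGroup (Fin n → Fin d) ℂ) : Matrix (Fin n → Fin d) (Fin n → Fin d) ℂ)
      with hB
    have h1 : B * A = 1 := by
      have := congrArg (fun x : Matrix.unitaryGroup (Fin n → Fin d) ℂ =>
        (x : Matrix (Fin n → Fin d) (Fin n → Fin d) ℂ)) (inv_mul_cancel a)
      simpa [hA, hB] using this
    have h2 : A * B = 1 := by
      have := congrArg (fun x : Matrix.unitaryGroup (Fin n → Fin d) ℂ =>
        (x : Matrix (Fin n → Fin d) (Fin n → Fin d) ℂ)) (mul_inv_cancel a)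
      simpa [hA, hB] using this
    show B * tp n W = tp n W * B
    calc B * tp n W = B * tp n W * (A * B) := by rw [h2, mul_one]
      _ = B * (tp n W * A) * B := by simp only [mul_assoc]
      _ = B * (A * tp n W) * B := by rw [← ha W hW]
      _ = (B * A) * (tp n W * B) := by simp only [mul_assoc]
      _ = tp n W * B := by rw [h1, one_mul]

/-!
The twirl `X = ∫ V M Vᴴ dμ` commutes with `G` by left invariance. The permutation average
`T = (n!)⁻¹ ∑_π O π * M * (O π)ᴴ` commutes with `G` as well: `V ∈ G` commutes with `W^{⊗n}` for unitary `W`, hence with `A^{⊗n}` for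
every `A` (commuting is a polynomial identity, first in the diagonal `z` of `U diag(z) Uᴴ`, whose
unitary points fill a box with infinite sides, then in `t` for the Hermitian `ℜA + t ℑA`), hence by
polarization with every symmetrized product `∑_σ ⨂ᵢ A_{σ i}`, and `T` is a combination of these.
Since the `O π` lie in `G`, both `X` and `T` satisfy `tr (· * B) = tr (M * B)` for every `B`
commuting with `G`; so `X - T` commutes with `G` and is trace-orthogonal to itself, hence zero.
-/

theorem Fintype.sum_perm_eq_sum_filter_surjective {ι M : Type*} [Fintype ι] [DecidableEq ι]
    [AddCommMonoid M] (w : (ι → ι) → M) :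
    ∑ σ : Equiv.Perm ι, w σ = ∑ φ ∈ Finset.univ.filter Function.Surjective, w φ := by
  refine Finset.sum_nbij (fun σ => ⇑σ) (fun σ _ => by simpa using σ.surjective)
    (fun σ _ τ _ h => DFunLike.coe_injective h) (fun φ hφ => ?_) (fun _ _ => rfl)
  have hφ : Function.Bijective φ := Finite.surjective_iff_bijective.mp (by simpa using hφ)
  exact ⟨Equiv.ofBijective φ hφ, by simp, rfl⟩

namespace Matrix

variable {ι m n R : Type*} [Fintype ι]

def piKron [CommMonoid R] (A : ι → Matrix m n R) : Matrix (ι → m) (ι → n) R :=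
  of fun f g => ∏ i, A i (f i) (g i)

theorem piKron_map [CommSemiring R] {S : Type*} [CommSemiring S] (φ : R →+* S)
    (A : ι → Matrix m n R) : (piKron A).map φ = piKron fun i => (A i).map φ := by
  ext f g
  simp [piKron, map_prod]

theorem single_eq_piKron [CommSemiring R] [DecidableEq m] [DecidableEq n] (f : ι → m)
    (g : ι → n) : single f g (1 : R) = piKron fun i => single (f i) (g i) 1 := by
  ext f' g'
  simp only [piKron, of_apply, single_apply]
  by_cases h : f = f' ∧ g = g'
  · obtain ⟨rfl, rfl⟩ := h
    simp
  · rw [if_neg h]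
    simp only [not_and_or, funext_iff, not_forall] at h
    obtain ⟨i, hi⟩ | ⟨i, hi⟩ := h
    all_goals exact (Finset.prod_eq_zero (Finset.mem_univ i) (by simp [hi])).symm

theorem piKron_submatrix_arrowCongr [CommMonoid R] (A : ι → Matrix m n R) (π : Equiv.Perm ι) :
    (piKron A).submatrix (π.symm.arrowCongr (Equiv.refl m)) (π.symm.arrowCongr (Equiv.refl n)) =
      piKron fun i => A (π.symm i) := by
  ext f g
  simp only [piKron, submatrix_apply, of_apply, Equiv.arrowCongr_apply]
  rw [← Equiv.prod_comp π (fun i => A (π.symm i) (f i) (g i))]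
  simp

theorem sum_piFinset_piKron [CommSemiring R] [DecidableEq ι] (A : ι → Matrix m n R)
    (s : Finset ι) :
    ∑ φ ∈ Fintype.piFinset (fun _ : ι => s), piKron (fun i => A (φ i)) =
      piKron fun _ => ∑ j ∈ s, A j := by
  ext f g
  simp [piKron, sum_apply, Finset.prod_univ_sum]

/-- Polarization: Ryser's inclusion–exclusion formula for the permanent, in tensor form. -/
theorem sum_perm_piKron [CommRing R] [DecidableEq ι] (A : ι → Matrix m n R) :
    ∑ σ : Equiv.Perm ι, piKron (fun i => A (σ i)) =
      ∑ t : Finset ι, (-1 : ℤ) ^ t.card • piKron fun _ => ∑ j ∈ tᶜ, A j := by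
  let S : ι → Finset (ι → ι) := fun j => Finset.univ.filter fun φ => ∀ i, φ i ≠ j
  have hsurj : Finset.univ.filter Function.Surjective = Finset.univ.inf fun j => (S j)ᶜ := by
    ext φ
    simp [S, Finset.mem_inf, Function.Surjective]
  have hinf : ∀ t : Finset ι, t.inf S = Fintype.piFinset fun _ => tᶜ := by
    intro t
    ext φ
    simp only [S, Finset.mem_inf, Finset.mem_filter, Finset.mem_univ, true_and,
      Fintype.mem_piFinset, Finset.mem_compl]
    exact ⟨fun h a ha => h _ ha a rfl, fun h i hi a ha => h a (ha ▸ hi)⟩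
  rw [Fintype.sum_perm_eq_sum_filter_surjective (fun φ => piKron fun i => A (φ i)), hsurj,
    Finset.inclusion_exclusion_sum_inf_compl, Finset.powerset_univ]
  simp_rw [hinf, sum_piFinset_piKron]

theorem permMatrix_mul_mul_conjTranspose [DecidableEq m] [Fintype m] [NonAssocSemiring R]
    [StarRing R] (σ : Equiv.Perm m) (X : Matrix m m R) :
    σ.permMatrix R * X * (σ.permMatrix R)ᴴ = X.submatrix σ σ := by
  rw [conjTranspose_permMatrix, Equiv.Perm.permMatrix, PEquiv.toMatrix_toPEquiv_mul,
    Equiv.Perm.permMatrix, PEquiv.mul_toMatrix_toPEquiv]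
  rfl

theorem permMatrix_mem_unitaryGroup [DecidableEq m] [Fintype m] [CommRing R] [StarRing R]
    (σ : Equiv.Perm m) : σ.permMatrix R ∈ unitaryGroup m R := by
  rw [mem_unitaryGroup_iff, star_eq_conjTranspose, conjTranspose_permMatrix, ← permMatrix_mul,
    inv_mul_cancel, permMatrix_one]

end Matrix

open Matrix

theorem Complex.infinite_sphere (x : ℂ) {r : ℝ} (hr : 0 < r) : (Metric.sphere x r).Infinite :=
  (isPreconnected_sphere (by simp [Complex.rank_real_complex]) x r).infinite_of_nontrivial
    ⟨x + r, by simp [hr.le], x - r, by simp [hr.le], fun h => by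
      have := congrArg Complex.re h
      simp at this
      linarith⟩

section TensorPowerCommutant

variable {ι m : Type*} [Fintype ι] [DecidableEq ι] [Fintype m] [DecidableEq m]
  (V : Matrix (ι → m) (ι → m) ℂ)

theorem commute_piKron_eval_of_forall_mem_pi {σ : Type*} (P : Matrix m m (MvPolynomial σ ℂ))
    (s : σ → Set ℂ) (hs : ∀ i, (s i).Infinite)
    (h : ∀ z ∈ Set.pi .univ s, Commute V (piKron fun _ : ι => P.map (MvPolynomial.eval z)))
    (z : σ → ℂ) : Commute V (piKron fun _ : ι => P.map (MvPolynomial.eval z)) := by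
  let Q := V.map MvPolynomial.C * piKron (fun _ : ι => P) -
    piKron (fun _ : ι => P) * V.map MvPolynomial.C
  have hQ : ∀ z, (MvPolynomial.eval z).mapMatrix Q =
      V * piKron (fun _ : ι => P.map (MvPolynomial.eval z)) -
        piKron (fun _ : ι => P.map (MvPolynomial.eval z)) * V := by
    intro z
    simp only [Q, map_sub, map_mul, RingHom.mapMatrix_apply, piKron_map, Matrix.map_map]
    simp [Function.comp_def]
  have hQ0 : Q = 0 := by
    refine Matrix.ext fun f g => MvPolynomial.funext_set s hs fun z hz => ?_
    have := congr_fun₂ (hQ z) f g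
    rw [(h z hz).eq, sub_self] at this
    simpa using this
  have := hQ z
  rwa [hQ0, map_zero, eq_comm, sub_eq_zero] at this

variable {V} (hV : ∀ W ∈ unitaryGroup m ℂ, Commute V (piKron fun _ : ι => W))
include hV

theorem commute_piKron_unitary_conj_diagonal {U : Matrix m m ℂ} (hU : U ∈ unitaryGroup m ℂ)
    (z : m → ℂ) : Commute V (piKron fun _ : ι => U * diagonal z * star U) := by
  let P : Matrix m m (MvPolynomial m ℂ) :=
    U.map MvPolynomial.C * diagonal MvPolynomial.X * (star U).map MvPolynomial.C
  have hP : ∀ z, P.map (MvPolynomial.eval z) = U * diagonal z * star U := by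
    intro z
    simp [P, Matrix.map_mul, Matrix.map_map, Function.comp_def]
  have key := commute_piKron_eval_of_forall_mem_pi V P (fun _ => Metric.sphere 0 1)
    (fun _ => Complex.infinite_sphere 0 one_pos) (fun z hz => ?_) z
  · rwa [hP] at key
  rw [hP]
  refine hV _ (mul_mem (mul_mem hU ?_) (Unitary.star_mem hU))
  rw [mem_unitaryGroup_iff, star_eq_conjTranspose, diagonal_conjTranspose, diagonal_mul_diagonal]
  convert diagonal_one with i
  have hzi : ‖z i‖ = 1 := by simpa using hz i trivial
  simp [Complex.mul_conj', hzi]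

theorem commute_piKron_of_isHermitian {H : Matrix m m ℂ} (hH : H.IsHermitian) :
    Commute V (piKron fun _ : ι => H) := by
  rw [hH.spectral_theorem, Unitary.conjStarAlgAut_apply]
  exact commute_piKron_unitary_conj_diagonal hV hH.eigenvectorUnitary.2 _

open ComplexStarModule in
theorem commute_piKron_of_forall_unitary (A : Matrix m m ℂ) :
    Commute V (piKron fun _ : ι => A) := by
  let P : Matrix m m (MvPolynomial Unit ℂ) := (ℜ A : Matrix m m ℂ).map MvPolynomial.C +
    (MvPolynomial.X () : MvPolynomial Unit ℂ) • (ℑ A : Matrix m m ℂ).map MvPolynomial.C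
  have hP : ∀ z, P.map (MvPolynomial.eval z) =
      (ℜ A : Matrix m m ℂ) + z () • (ℑ A : Matrix m m ℂ) := by
    intro z
    ext i j
    simp [P]
  have key := commute_piKron_eval_of_forall_mem_pi V P (fun _ => Set.range Complex.ofReal)
    (fun _ => Set.infinite_range_of_injective Complex.ofReal_injective) (fun z hz => ?_)
    (fun _ => Complex.I)
  · rwa [hP, realPart_add_I_smul_imaginaryPart] at key
  obtain ⟨t, ht⟩ := hz () trivial
  rw [hP, ← ht, Complex.coe_smul]
  exact commute_piKron_of_isHermitian hV ((ℜ A).2.add ((IsSelfAdjoint.all t).smul (ℑ A).2))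

end TensorPowerCommutant

section UnitaryConjugation

variable {m : Type*} [Fintype m] [DecidableEq m]

theorem Matrix.commute_of_mul_mul_conjTranspose_eq {U X : Matrix m m ℂ}
    (hU : U ∈ unitaryGroup m ℂ) (h : U * X * Uᴴ = X) : Commute U X := by
  have hUU : Uᴴ * U = 1 := mem_unitaryGroup_iff'.mp hU
  calc U * X = U * X * (Uᴴ * U) := by rw [hUU, mul_one]
    _ = X * U := by rw [← mul_assoc, h]

theorem Matrix.trace_mul_mul_conjTranspose_mul {U B : Matrix m m ℂ} (hU : U ∈ unitaryGroup m ℂ)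
    (hUB : Commute U B) (M : Matrix m m ℂ) : trace (U * M * Uᴴ * B) = trace (M * B) := by
  have hUU : Uᴴ * U = 1 := mem_unitaryGroup_iff'.mp hU
  rw [mul_assoc, mul_assoc, trace_mul_comm, mul_assoc, mul_assoc, ← hUB.eq, ← mul_assoc Uᴴ,
    hUU, one_mul]

open scoped ComplexOrder in
theorem eq_of_commute_of_trace_mul_eq (G : Subgroup (unitaryGroup m ℂ)) {X Y : Matrix m m ℂ}
    (hX : ∀ g : G, Commute (g : Matrix m m ℂ) X) (hY : ∀ g : G, Commute (g : Matrix m m ℂ) Y)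
    (h : ∀ B, (∀ g : G, Commute (g : Matrix m m ℂ) B) → trace (X * B) = trace (Y * B)) :
    X = Y := by
  have hΔ : ∀ g : G, Commute (g : Matrix m m ℂ) (X - Y)ᴴ := fun g =>
    ((hX g⁻¹).sub_right (hY g⁻¹)).star_right
  rw [← sub_eq_zero, ← trace_mul_conjTranspose_self_eq_zero_iff, sub_mul, trace_sub,
    h _ hΔ, sub_self]

end UnitaryConjugation

instance matrixBorelSpace {m n : Type*} [Fintype m] [Fintype n] : BorelSpace (Matrix m n ℂ) :=
  inferInstanceAs (BorelSpace (m → n → ℂ))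

theorem Matrix.norm_mul_mul_conjTranspose_apply_le {m : Type*} [Fintype m] [DecidableEq m]
    {U : Matrix m m ℂ} (hU : U ∈ unitaryGroup m ℂ) (M : Matrix m m ℂ) (a b : m) :
    ‖(U * M * Uᴴ) a b‖ ≤ ∑ c, ∑ e, ‖M c e‖ := by
  simp only [mul_apply, conjTranspose_apply, Finset.sum_mul]
  rw [Finset.sum_comm]
  refine (norm_sum_le _ _).trans (Finset.sum_le_sum fun c _ => (norm_sum_le _ _).trans
    (Finset.sum_le_sum fun e _ => ?_))
  simp only [norm_mul, norm_star]
  have h1 := entry_norm_bound_of_unitary hU a c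
  have h2 := entry_norm_bound_of_unitary hU b e
  calc ‖U a c‖ * ‖M c e‖ * ‖U b e‖ ≤ 1 * ‖M c e‖ * 1 := by gcongr
    _ = ‖M c e‖ := by ring

theorem LinearMap.map_integral_entrywise {α m n : Type*} [Fintype m] [Fintype n] [DecidableEq m]
    [DecidableEq n] [MeasurableSpace α] {μ : Measure α} (φ : Matrix m n ℂ →ₗ[ℂ] ℂ)
    {K : α → Matrix m n ℂ} (hK : ∀ a b, Integrable (fun x => K x a b) μ) :
    φ (of fun a b => ∫ x, K x a b ∂μ) = ∫ x, φ (K x) ∂μ := by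
  have hφ : ∀ X : Matrix m n ℂ, φ X = ∑ a, ∑ b, X a b * φ (Matrix.single a b 1) := by
    intro X
    conv_lhs => rw [matrix_eq_sum_single X]
    simp only [map_sum]
    congr! with a _ b _
    rw [← smul_eq_mul, ← map_smul, Matrix.smul_single, smul_eq_mul, mul_one]
  rw [hφ]
  simp_rw [hφ (K _)]
  rw [integral_finsetSum _ fun a _ => integrable_finsetSum _ fun b _ => (hK a b).mul_const _]
  refine Finset.sum_congr rfl fun a _ => ?_
  rw [integral_finsetSum _ fun b _ => (hK a b).mul_const _]
  simp [integral_mul_const]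

section Twirl

variable {m : Type*} [Fintype m] [DecidableEq m] {G : Subgroup (unitaryGroup m ℂ)}
  (μ : Measure G)

noncomputable def twirl (M : Matrix m m ℂ) : Matrix m m ℂ :=
  of fun a b => ∫ V, ((V : Matrix m m ℂ) * M * (V : Matrix m m ℂ)ᴴ) a b ∂μ

theorem continuous_mul_mul_conjTranspose_apply (M : Matrix m m ℂ) (a b : m) :
    Continuous fun V : G => ((V : Matrix m m ℂ) * M * (V : Matrix m m ℂ)ᴴ) a b := by
  fun_prop

variable [IsFiniteMeasure μ]

theorem integrable_mul_mul_conjTranspose_apply (M : Matrix m m ℂ) (a b : m) :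
    Integrable (fun V : G => ((V : Matrix m m ℂ) * M * (V : Matrix m m ℂ)ᴴ) a b) μ :=
  .of_bound (continuous_mul_mul_conjTranspose_apply M a b).aestronglyMeasurable _
    (ae_of_all _ fun V => norm_mul_mul_conjTranspose_apply_le V.1.2 M a b)

theorem commute_twirl (hμ : ∀ g : G, μ.map (g * ·) = μ) (M : Matrix m m ℂ) (g : G) :
    Commute (g : Matrix m m ℂ) (twirl μ M) := by
  refine commute_of_mul_mul_conjTranspose_eq g.1.2 (Matrix.ext fun a b => ?_)
  let φ : Matrix m m ℂ →ₗ[ℂ] ℂ := entryLinearMap ℂ ℂ a b ∘ₗ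
    LinearMap.mulLeft ℂ (g : Matrix m m ℂ) ∘ₗ LinearMap.mulRight ℂ (g : Matrix m m ℂ)ᴴ
  have hφ := φ.map_integral_entrywise (integrable_mul_mul_conjTranspose_apply μ M)
  simp only [φ, LinearMap.comp_apply, LinearMap.mulLeft_apply, LinearMap.mulRight_apply,
    entryLinearMap_apply, ← mul_assoc] at hφ
  rw [twirl, hφ]
  conv_rhs => rw [of_apply, ← hμ g]
  rw [integral_map (continuous_const_mul g).aemeasurable
    (continuous_mul_mul_conjTranspose_apply M a b).aestronglyMeasurable]
  simp [mul_assoc]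

theorem trace_twirl_mul [IsProbabilityMeasure μ] (M : Matrix m m ℂ) {B : Matrix m m ℂ}
    (hB : ∀ g : G, Commute (g : Matrix m m ℂ) B) : trace (twirl μ M * B) = trace (M * B) := by
  have := (traceLinearMap m ℂ ℂ ∘ₗ LinearMap.mulRight ℂ B).map_integral_entrywise
    (integrable_mul_mul_conjTranspose_apply μ M)
  simp only [LinearMap.comp_apply, LinearMap.mulRight_apply, traceLinearMap_apply] at this
  rw [twirl, this]
  simp [trace_mul_mul_conjTranspose_mul (Subtype.prop _) (hB _)]

end Twirl

section PermutationOperators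

variable {d n : ℕ}

theorem permOp_eq_permMatrix (π : Equiv.Perm (Fin n)) :
    permOp (d := d) π = Equiv.Perm.permMatrix ℂ (π.symm.arrowCongr (Equiv.refl (Fin d))) := by
  ext f g
  simp only [permOp, of_apply, PEquiv.toMatrix_apply, Equiv.toPEquiv_apply, Option.mem_def,
    Option.some_inj]
  exact if_congr eq_comm rfl rfl

theorem permOp_mem_unitaryGroup (π : Equiv.Perm (Fin n)) :
    permOp (d := d) π ∈ unitaryGroup (Fin n → Fin d) ℂ := by
  rw [permOp_eq_permMatrix]
  exact permMatrix_mem_unitaryGroup _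

theorem permOp_mul_piKron_mul_conjTranspose (π : Equiv.Perm (Fin n))
    (A : Fin n → Matrix (Fin d) (Fin d) ℂ) :
    permOp π * piKron A * (permOp π)ᴴ = piKron fun i => A (π.symm i) := by
  rw [permOp_eq_permMatrix, permMatrix_mul_mul_conjTranspose, piKron_submatrix_arrowCongr]

theorem permOp_commute_tp (π : Equiv.Perm (Fin n)) (W : Matrix (Fin d) (Fin d) ℂ) :
    Commute (permOp π) (tp n W) :=
  commute_of_mul_mul_conjTranspose_eq (permOp_mem_unitaryGroup π)
    (permOp_mul_piKron_mul_conjTranspose π _)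

theorem sum_permOp_mul_single_mul_conjTranspose (f g : Fin n → Fin d) (c : ℂ) :
    ∑ π, permOp π * single f g c * (permOp π)ᴴ =
      c • ∑ σ : Equiv.Perm (Fin n), piKron fun i => single (f (σ i)) (g (σ i)) (1 : ℂ) := by
  have hsingle : single f g c = c • single f g (1 : ℂ) := by rw [smul_single, smul_eq_mul, mul_one]
  rw [hsingle, single_eq_piKron, Finset.smul_sum]
  refine Fintype.sum_equiv (Equiv.inv _) _ _ fun π => ?_
  rw [mul_smul_comm, smul_mul_assoc, permOp_mul_piKron_mul_conjTranspose]
  rfl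

theorem commute_sum_permOp_conj {V : Matrix (Fin n → Fin d) (Fin n → Fin d) ℂ}
    (hV : ∀ A, Commute V (tp n A)) (M : Matrix (Fin n → Fin d) (Fin n → Fin d) ℂ) :
    Commute V (∑ π, permOp π * M * (permOp π)ᴴ) := by
  induction M using Matrix.induction_on' with
  | h_zero => simp
  | h_add p q hp hq => simpa [mul_add, add_mul, Finset.sum_add_distrib] using hp.add_right hq
  | h_std_basis f g c =>
    rw [sum_permOp_mul_single_mul_conjTranspose, sum_perm_piKron fun i => single (f i) (g i) 1]
    exact .smul_right (.sum_right _ _ _ fun t _ => (hV _).smul_right _) c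

theorem trace_sum_permOp_conj_mul {B : Matrix (Fin n → Fin d) (Fin n → Fin d) ℂ}
    (hB : ∀ π, Commute (permOp π) B) (M : Matrix (Fin n → Fin d) (Fin n → Fin d) ℂ) :
    trace ((∑ π, permOp π * M * (permOp π)ᴴ) * B) = n.factorial • trace (M * B) := by
  simp [Finset.sum_mul, trace_sum, Fintype.card_perm,
    trace_mul_mul_conjTranspose_mul (permOp_mem_unitaryGroup _) (hB _)]

end PermutationOperators

theorem haar_avg_eq_perm_avg_general (d n : ℕ)
    (μ : Measure (sudSymmetricGroup d n)) [IsProbabilityMeasure μ]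
    (hleft : ∀ g : sudSymmetricGroup d n, μ.map (fun x => g * x) = μ)
    (M : Matrix (Fin n → Fin d) (Fin n → Fin d) ℂ) (f g : Fin n → Fin d) :
    ∫ V : sudSymmetricGroup d n,
        (((V : Matrix.unitaryGroup (Fin n → Fin d) ℂ) : Matrix (Fin n → Fin d) (Fin n → Fin d) ℂ) *
          M * ((V : Matrix.unitaryGroup (Fin n → Fin d) ℂ) :
            Matrix (Fin n → Fin d) (Fin n → Fin d) ℂ)ᴴ) f g ∂μ =
      (((n.factorial : ℂ))⁻¹ •
        ∑ π : Equiv.Perm (Fin n), permOp (d := d) π * M * (permOp (d := d) π)ᴴ) f g := by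
  let permElem (π : Equiv.Perm (Fin n)) : sudSymmetricGroup d n :=
    ⟨⟨permOp π, permOp_mem_unitaryGroup π⟩, fun W _ => permOp_commute_tp π W⟩
  suffices twirl μ M = ((n.factorial : ℂ))⁻¹ • ∑ π, permOp (d := d) π * M * (permOp π)ᴴ from
    congr_fun₂ this f g
  refine eq_of_commute_of_trace_mul_eq _ (commute_twirl μ hleft M) (fun V => ?_) fun B hB => ?_
  · exact (commute_sum_permOp_conj
      (commute_piKron_of_forall_unitary fun W hW => V.2 W hW) M).smul_right _
  · rw [trace_twirl_mul μ M hB, smul_mul_assoc, trace_smul,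
      trace_sum_permOp_conj_mul (fun π => hB (permElem π)), nsmul_eq_mul, smul_eq_mul,
      ← mul_assoc, inv_mul_cancel₀ (Nat.cast_ne_zero.mpr n.factorial_ne_zero), one_mul]

/-- **Haar averaging over SU(d)-symmetric unitaries equals symmetric-group averaging**
(Lemma D.1): for any bi-invariant probability measure `μ` on the group of `SU(d)`-symmetric
unitaries on `n` qudits and any matrix `M`, the twirl `∫ V M V† dμ(V)` equals the average of
`O_π M O_π†` over all permutations `π ∈ S_n` (entrywise Bochner integrals). -/
theorem haar_avg_eq_perm_avg (d n : ℕ) (hd : 1 ≤ d) (hn : 1 ≤ n)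
    (μ : Measure (sudSymmetricGroup d n)) [IsProbabilityMeasure μ]
    (hleft : ∀ g : sudSymmetricGroup d n, μ.map (fun x => g * x) = μ)
    (hright : ∀ g : sudSymmetricGroup d n, μ.map (fun x => x * g) = μ)
    (M : Matrix (Fin n → Fin d) (Fin n → Fin d) ℂ) (f g : Fin n → Fin d) :
    ∫ V : sudSymmetricGroup d n,
        (((V : Matrix.unitaryGroup (Fin n → Fin d) ℂ) : Matrix (Fin n → Fin d) (Fin n → Fin d) ℂ) *
          M * ((V : Matrix.unitaryGroup (Fin n → Fin d) ℂ) :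
            Matrix (Fin n → Fin d) (Fin n → Fin d) ℂ)ᴴ) f g ∂μ =
      (((n.factorial : ℂ))⁻¹ •
        ∑ π : Equiv.Perm (Fin n), permOp (d := d) π * M * (permOp (d := d) π)ᴴ) f g :=
  haar_avg_eq_perm_avg_general d n μ hleft M f g
end

section
/- SDP decomposition bounds for the conditional min-entropy (Lemma B.1, 'lem:sum'): let P₁, P₂, Q be nonempty finite types and m ≥ 1. For each i : Fin m let Π i : Matrix P₁ P₁ ℂ be a nonzero orthogonal projection ((Π i)ᴴ = Π i, (Π i) * (Π i) = Π i, Π i ≠ 0) with (Π i) * (Π j) = 0 whenever i ≠ j, and let ρ i : Matrix (P₂ × Q) (P₂ × Q) ℂ be positive semidefinite. Define ρtot : Matrix ((P₁ × P₂) × Q) ((P₁ × P₂) × Q) ℂ by ρtot (((p₁,p₂),q), ((p₁',p₂'),q')) = ∑ i, (Π i) p₁ p₁' * (ρ i) ((p₂,q)) ((p₂',q')). Then (1/m) * ∑ i, sdp(ρ i) ≤ sdp(ρtot) ≤ ∑ i, sdp(ρ i), where sdp(ρ i) is taken with conditioning system Q and ambient system P₂, and sdp(ρtot) with conditioning system Q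 and ambient system P₁ × P₂. -/
open Matrix Kronecker
open scoped ComplexOrder

/-- The value of the semidefinite program whose negative base-2 logarithm is the conditional
quantum min-entropy `H_min(P|Q)_τ`: the infimum of `Tr σ` over positive semidefinite `σ` on `Q`
with `1_P ⊗ σ ≥ τ`. -/
noncomputable def sdp {P Q : Type*} [Fintype P] [Fintype Q] [DecidableEq P] [DecidableEq Q]
    (τ : Matrix (P × Q) (P × Q) ℂ) : ℝ :=
  sInf { x : ℝ | ∃ σ : Matrix Q Q ℂ, σ.PosSemidef ∧
    ((1 : Matrix P P ℂ) ⊗ₖ σ - τ).PosSemidef ∧ x = σ.trace.re }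

/-! If `σ i` is feasible for `ρ i`, then `∑ i, σ i` is feasible for `ρtot`, because
`Π i ⊗ ρ i ≤ Π i ⊗ (1 ⊗ σ i) ≤ 1 ⊗ (1 ⊗ σ i)`; this is the upper bound. Conversely, compressing
`1 ⊗ (1 ⊗ σ) - ρtot` with `v ⊗ 1`, for a nonzero `v` in the range of `Π i` (which every other
`Π j` kills), shows that a `σ` feasible for `ρtot` is feasible for each `ρ i`, so
`sdp (ρ i) ≤ sdp ρtot` for each of the `m` indices. -/

open scoped MatrixOrder

lemma Real.sInf_le_sum_sInf {ι : Type*} [Fintype ι] {S : ι → Set ℝ} {T : Set ℝ}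
    (hS : ∀ i, (S i).Nonempty) (hT : BddBelow T)
    (h : ∀ x : ι → ℝ, (∀ i, x i ∈ S i) → ∑ i, x i ∈ T) : sInf T ≤ ∑ i, sInf (S i) := by
  refine le_of_forall_pos_le_add fun ε hε => ?_
  set δ := ε / (Fintype.card ι + 1)
  have hδ : 0 < δ := by positivity
  choose x hxS hx using fun i => Real.lt_sInf_add_pos (hS i) hδ
  calc sInf T ≤ ∑ i, x i := csInf_le hT (h x hxS)
    _ ≤ ∑ i, (sInf (S i) + δ) := Finset.sum_le_sum fun i _ => (hx i).le
    _ = ∑ i, sInf (S i) + Fintype.card ι * δ := by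
      rw [Finset.sum_add_distrib, Finset.sum_const, Finset.card_univ, nsmul_eq_mul]
    _ ≤ ∑ i, sInf (S i) + ε := by
      gcongr
      rw [mul_div_assoc', div_le_iff₀ (by positivity)]
      nlinarith

namespace Matrix

section Kronecker

variable {l m n p α : Type*}

lemma kronecker_sub [NonUnitalNonAssocRing α] (A : Matrix l m α) (B₁ B₂ : Matrix n p α) :
    A ⊗ₖ (B₁ - B₂) = A ⊗ₖ B₁ - A ⊗ₖ B₂ := by
  ext; simp [mul_sub]

lemma sub_kronecker [NonUnitalNonAssocRing α] (A₁ A₂ : Matrix l m α) (B : Matrix n p α) :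
    (A₁ - A₂) ⊗ₖ B = A₁ ⊗ₖ B - A₂ ⊗ₖ B := by
  ext; simp [sub_mul]

lemma kronecker_sum {ι : Type*} [NonUnitalNonAssocSemiring α] (s : Finset ι) (A : Matrix l m α)
    (B : ι → Matrix n p α) : A ⊗ₖ (∑ i ∈ s, B i) = ∑ i ∈ s, A ⊗ₖ B i := by
  ext; simp [sum_apply, Finset.mul_sum]

end Kronecker

variable {m n : Type*} [Fintype m] [Fintype n]

open scoped Matrix.Norms.L2Operator in
lemma IsHermitian.exists_le_smul_one [DecidableEq n] {A : Matrix n n ℂ} (hA : A.IsHermitian) :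
    ∃ c : ℝ, 0 ≤ c ∧ A ≤ (c : ℂ) • 1 :=
  ⟨‖A‖, norm_nonneg _, by
    simpa [Algebra.algebraMap_eq_smul_one] using IsSelfAdjoint.le_algebraMap_norm_self hA⟩

lemma _root_.IsStarProjection.kronecker_le_one_kronecker [DecidableEq m] {p : Matrix m m ℂ}
    (hp : IsStarProjection p) {X Y : Matrix n n ℂ} (hX : 0 ≤ X) (hYX : Y ≤ X) :
    p ⊗ₖ Y ≤ (1 : Matrix m m ℂ) ⊗ₖ X :=
  calc p ⊗ₖ Y ≤ p ⊗ₖ X := by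
        rw [le_iff, ← kronecker_sub]
        exact hp.nonneg.posSemidef.kronecker hYX
    _ ≤ (1 : Matrix m m ℂ) ⊗ₖ X := by
        rw [le_iff, ← sub_kronecker]
        exact hp.one_sub_nonneg.posSemidef.kronecker hX.posSemidef

lemma sum_kronecker_le_one_kronecker_sum [DecidableEq m] {ι : Type*} (s : Finset ι)
    {p : ι → Matrix m m ℂ} (hp : ∀ i ∈ s, IsStarProjection (p i)) {X Y : ι → Matrix n n ℂ}
    (hX : ∀ i ∈ s, 0 ≤ X i) (hYX : ∀ i ∈ s, Y i ≤ X i) :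
    ∑ i ∈ s, p i ⊗ₖ Y i ≤ (1 : Matrix m m ℂ) ⊗ₖ ∑ i ∈ s, X i := by
  rw [kronecker_sum]
  exact Finset.sum_le_sum fun i hi => (hp i hi).kronecker_le_one_kronecker (hX i hi) (hYX i hi)

def colKroneckerOne [DecidableEq n] (v : m → ℂ) : Matrix (m × n) n ℂ :=
  of fun z y => v z.1 * (1 : Matrix n n ℂ) z.2 y

-- Without `(n := n)` the product below elaborates through the `CStarMatrix` instances.
lemma colKroneckerOne_conjTranspose_mul_kronecker_mul [DecidableEq n] (v : m → ℂ)
    (A : Matrix m m ℂ) (B : Matrix n n ℂ) :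
    (colKroneckerOne (n := n) v)ᴴ * (A ⊗ₖ B) * colKroneckerOne (n := n) v
      = (star v ⬝ᵥ A *ᵥ v) • B := by
  ext x y
  simp [colKroneckerOne, mul_apply, Fintype.sum_prod_type, one_apply, dotProduct, mulVec,
    Finset.sum_mul, Finset.mul_sum, apply_ite (starRingEnd ℂ)]
  rw [Finset.sum_comm]
  exact Finset.sum_congr rfl fun _ _ => Finset.sum_congr rfl fun _ _ => by ring

lemma le_of_sum_kronecker_le_one_kronecker [DecidableEq m] [DecidableEq n] {ι : Type*} [Fintype ι]
    {p : ι → Matrix m m ℂ} {i : ι} (hpi : IsIdempotentElem (p i)) (hpi0 : p i ≠ 0)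
    (horth : ∀ j, j ≠ i → p j * p i = 0)
    {Y : ι → Matrix n n ℂ} {Z : Matrix n n ℂ} (h : ∑ j, p j ⊗ₖ Y j ≤ (1 : Matrix m m ℂ) ⊗ₖ Z) :
    Y i ≤ Z := by
  obtain ⟨w, hw⟩ : ∃ w, p i *ᵥ w ≠ 0 := by
    by_contra! hzero
    exact hpi0 (ext_iff_mulVec.mpr fun w => by simpa using hzero w)
  set v := p i *ᵥ w
  have hvi : p i *ᵥ v = v := by rw [mulVec_mulVec, hpi.eq]
  have hvj : ∀ j, j ≠ i → p j *ᵥ v = 0 := fun j hj => by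
    rw [mulVec_mulVec, horth j hj, zero_mulVec]
  set c := star v ⬝ᵥ v
  have hc : 0 < c := dotProduct_star_self_pos_iff.mpr hw
  have hcompress : (c • (Z - Y i)).PosSemidef := by
    have := (le_iff.mp h).conjTranspose_mul_mul_same (colKroneckerOne (n := n) v)
    rwa [Matrix.mul_sub, Matrix.sub_mul, Matrix.mul_sum, Matrix.sum_mul,
      colKroneckerOne_conjTranspose_mul_kronecker_mul, Finset.sum_congr rfl fun j _ =>
        colKroneckerOne_conjTranspose_mul_kronecker_mul v (p j) (Y j),
      Finset.sum_eq_single i (fun j _ hj => by rw [hvj j hj, dotProduct_zero, zero_smul])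
        (by simp), hvi, one_mulVec, ← smul_sub] at this
  simpa [le_iff, smul_smul, inv_mul_cancel₀ hc.ne'] using
    hcompress.smul (RCLike.inv_pos.mpr hc).le

end Matrix

section Sdp

variable {P Q : Type*} [DecidableEq P]

def IsSdpFeasible (τ : Matrix (P × Q) (P × Q) ℂ) (σ : Matrix Q Q ℂ) : Prop :=
  σ.PosSemidef ∧ τ ≤ (1 : Matrix P P ℂ) ⊗ₖ σ

lemma isSdpFeasible_submatrix_prodAssoc_iff {P₁ P₂ : Type*} [DecidableEq P₁] [DecidableEq P₂]
    {τ : Matrix (P₁ × (P₂ × Q)) (P₁ × (P₂ × Q)) ℂ} {σ : Matrix Q Q ℂ} :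
    IsSdpFeasible (τ.submatrix (Equiv.prodAssoc P₁ P₂ Q) (Equiv.prodAssoc P₁ P₂ Q)) σ ↔
      σ.PosSemidef ∧ τ ≤ (1 : Matrix P₁ P₁ ℂ) ⊗ₖ ((1 : Matrix P₂ P₂ ℂ) ⊗ₖ σ) := by
  have hone : (1 : Matrix (P₁ × P₂) (P₁ × P₂) ℂ) ⊗ₖ σ = ((1 : Matrix P₁ P₁ ℂ) ⊗ₖ
      ((1 : Matrix P₂ P₂ ℂ) ⊗ₖ σ)).submatrix (Equiv.prodAssoc P₁ P₂ Q)
        (Equiv.prodAssoc P₁ P₂ Q) := by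
    rw [← kronecker_assoc', submatrix_submatrix, one_kronecker_one]
    simp
  rw [IsSdpFeasible, hone, le_iff, le_iff]
  exact and_congr_right' (posSemidef_submatrix_equiv
    (M := (1 : Matrix P₁ P₁ ℂ) ⊗ₖ ((1 : Matrix P₂ P₂ ℂ) ⊗ₖ σ) - τ) _)

variable [Fintype Q]

lemma zero_mem_lowerBounds_sdp_set (τ : Matrix (P × Q) (P × Q) ℂ) :
    0 ∈ lowerBounds ((fun σ : Matrix Q Q ℂ => σ.trace.re) '' {σ | IsSdpFeasible τ σ}) := by
  rintro _ ⟨σ, hσ, rfl⟩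
  exact (Complex.nonneg_iff.mp hσ.1.trace_nonneg).1

variable [Fintype P] [DecidableEq Q]

lemma exists_isSdpFeasible_of_isHermitian {τ : Matrix (P × Q) (P × Q) ℂ} (hτ : τ.IsHermitian) :
    ∃ σ, IsSdpFeasible τ σ := by
  obtain ⟨c, hc, hτc⟩ := hτ.exists_le_smul_one
  refine ⟨(c : ℂ) • 1, PosSemidef.one.smul (by exact_mod_cast hc), ?_⟩
  rwa [kronecker_smul, one_kronecker_one]

lemma sdp_eq_sInf_image (τ : Matrix (P × Q) (P × Q) ℂ) :
    sdp τ = sInf ((fun σ : Matrix Q Q ℂ => σ.trace.re) '' {σ | IsSdpFeasible τ σ}) := by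
  unfold sdp
  congr 1
  ext x
  simp [IsSdpFeasible, le_iff, and_assoc, eq_comm]

lemma sdp_nonneg (τ : Matrix (P × Q) (P × Q) ℂ) : 0 ≤ sdp τ := by
  rw [sdp_eq_sInf_image]
  exact Real.sInf_nonneg (zero_mem_lowerBounds_sdp_set τ)

lemma sdp_le_sdp_of_forall_isSdpFeasible {τ : Matrix (P × Q) (P × Q) ℂ} {P' : Type*}
    [Fintype P'] [DecidableEq P'] {τ' : Matrix (P' × Q) (P' × Q) ℂ}
    (hne : ∃ σ, IsSdpFeasible τ σ) (h : ∀ σ, IsSdpFeasible τ σ → IsSdpFeasible τ' σ) :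
    sdp τ' ≤ sdp τ := by
  rw [sdp_eq_sInf_image, sdp_eq_sInf_image]
  obtain ⟨σ, hσ⟩ := hne
  exact csInf_le_csInf ⟨0, zero_mem_lowerBounds_sdp_set τ'⟩ ⟨_, σ, hσ, rfl⟩
    (Set.image_mono h)

lemma sdp_le_sum_sdp {ι : Type*} [Fintype ι] {τ : Matrix (P × Q) (P × Q) ℂ} {P' : Type*}
    [Fintype P'] [DecidableEq P'] {τs : ι → Matrix (P' × Q) (P' × Q) ℂ}
    (hne : ∀ i, ∃ σ, IsSdpFeasible (τs i) σ)
    (h : ∀ σs : ι → Matrix Q Q ℂ, (∀ i, IsSdpFeasible (τs i) (σs i)) →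
      IsSdpFeasible τ (∑ i, σs i)) :
    sdp τ ≤ ∑ i, sdp (τs i) := by
  simp only [sdp_eq_sInf_image]
  refine Real.sInf_le_sum_sInf (fun i => Set.Nonempty.image _ (hne i))
    ⟨0, zero_mem_lowerBounds_sdp_set τ⟩ fun x hx => ?_
  choose σs hσs hx using hx
  exact ⟨∑ i, σs i, h σs hσs, by simp [trace_sum, ← hx]⟩

end Sdp

theorem sdp_sum_bounds_general (P₁ P₂ Q : Type*)
    [Fintype P₁] [Fintype P₂] [Fintype Q]
    [DecidableEq P₁] [DecidableEq P₂] [DecidableEq Q]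
    (m : ℕ)
    (Pr : Fin m → Matrix P₁ P₁ ℂ)
    (hPrHerm : ∀ i, (Pr i)ᴴ = Pr i)
    (hPrIdem : ∀ i, Pr i * Pr i = Pr i)
    (hPrNe : ∀ i, Pr i ≠ 0)
    (hPrOrth : ∀ i j, i ≠ j → Pr i * Pr j = 0)
    (ρ : Fin m → Matrix (P₂ × Q) (P₂ × Q) ℂ)
    (hρ : ∀ i, (ρ i).PosSemidef)
    (ρtot : Matrix ((P₁ × P₂) × Q) ((P₁ × P₂) × Q) ℂ)
    (hρtot : ∀ x y : (P₁ × P₂) × Q,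
      ρtot x y = ∑ i, (Pr i) x.1.1 y.1.1 * (ρ i) (x.1.2, x.2) (y.1.2, y.2)) :
    (1 / m : ℝ) * ∑ i, sdp (ρ i) ≤ sdp ρtot ∧ sdp ρtot ≤ ∑ i, sdp (ρ i) := by
  have hρtot_eq : ρtot = (∑ i, Pr i ⊗ₖ ρ i).submatrix (Equiv.prodAssoc P₁ P₂ Q)
      (Equiv.prodAssoc P₁ P₂ Q) := by
    ext x y
    simp [hρtot, Matrix.sum_apply]
  have hsum : ∀ σs : Fin m → Matrix Q Q ℂ, (∀ i, IsSdpFeasible (ρ i) (σs i)) →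
      IsSdpFeasible ρtot (∑ i, σs i) := by
    intro σs hσs
    rw [hρtot_eq, isSdpFeasible_submatrix_prodAssoc_iff, kronecker_sum]
    exact ⟨posSemidef_sum _ fun i _ => (hσs i).1,
      sum_kronecker_le_one_kronecker_sum _ (fun i _ => ⟨hPrIdem i, hPrHerm i⟩)
        (fun i _ => (PosSemidef.one.kronecker (hσs i).1).nonneg) fun i _ => (hσs i).2⟩
  have hfeas i : ∃ σ, IsSdpFeasible (ρ i) σ :=
    exists_isSdpFeasible_of_isHermitian (hρ i).isHermitian
  have hsdp_le i : sdp (ρ i) ≤ sdp ρtot := by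
    refine sdp_le_sdp_of_forall_isSdpFeasible ⟨_, hsum _ fun j => (hfeas j).choose_spec⟩
      fun σ hσ => ?_
    rw [hρtot_eq, isSdpFeasible_submatrix_prodAssoc_iff] at hσ
    exact ⟨hσ.1, le_of_sum_kronecker_le_one_kronecker (hPrIdem i) (hPrNe i)
      (fun j hj => hPrOrth j i hj) hσ.2⟩
  refine ⟨?_, sdp_le_sum_sdp hfeas hsum⟩
  rw [one_div_mul_eq_div]
  refine div_le_of_le_mul₀ m.cast_nonneg (sdp_nonneg ρtot) ?_
  calc ∑ i, sdp (ρ i) ≤ ∑ _i : Fin m, sdp ρtot := Finset.sum_le_sum fun i _ => hsdp_le i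
    _ = sdp ρtot * m := by simp [mul_comm]

/-- **SDP decomposition bounds for the conditional min-entropy** (Lemma B.1): if
`ρtot = ∑ i, Π i ⊗ ρ i` with pairwise-orthogonal nonzero projectors `Π i` on `P₁` and positive
semidefinite `ρ i` on `P₂ × Q`, then the SDP value of `ρtot` (with conditioning system `Q`) is
between `(1/m) ∑ i sdp(ρ i)` and `∑ i sdp(ρ i)`. -/
theorem sdp_sum_bounds (P₁ P₂ Q : Type*)
    [Fintype P₁] [Fintype P₂] [Fintype Q]
    [DecidableEq P₁] [DecidableEq P₂] [DecidableEq Q]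
    [Nonempty P₁] [Nonempty P₂] [Nonempty Q]
    (m : ℕ) (hm : 1 ≤ m)
    (Pr : Fin m → Matrix P₁ P₁ ℂ)
    (hPrHerm : ∀ i, (Pr i)ᴴ = Pr i)
    (hPrIdem : ∀ i, Pr i * Pr i = Pr i)
    (hPrNe : ∀ i, Pr i ≠ 0)
    (hPrOrth : ∀ i j, i ≠ j → Pr i * Pr j = 0)
    (ρ : Fin m → Matrix (P₂ × Q) (P₂ × Q) ℂ)
    (hρ : ∀ i, (ρ i).PosSemidef)
    (ρtot : Matrix ((P₁ × P₂) × Q) ((P₁ × P₂) × Q) ℂ)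
    (hρtot : ∀ x y : (P₁ × P₂) × Q,
      ρtot x y = ∑ i, (Pr i) x.1.1 y.1.1 * (ρ i) (x.1.2, x.2) (y.1.2, y.2)) :
    (1 / m : ℝ) * ∑ i, sdp (ρ i) ≤ sdp ρtot ∧ sdp ρtot ≤ ∑ i, sdp (ρ i) :=
  sdp_sum_bounds_general P₁ P₂ Q m Pr hPrHerm hPrIdem hPrNe hPrOrth ρ hρ ρtot hρtot
end

section
/- Min-entropy–operator-norm sandwich (Lemma A.1, 'lem:entropy'): let P, Q be nonempty finite types and let ρ : Matrix (P × Q) (P × Q) ℂ be positive semidefinite. Then ‖ρ‖ ≤ sdp(ρ) ≤ (Fintype.card Q) * ‖ρ‖, where ‖·‖ denotes the ℓ²-operator norm (largest singular value) of a matrix. Equivalently, −log₂ ‖ρ‖ − log₂ (Fintype.card Q) ≤ H_min(P|Q)_ρ ≤ −log₂ ‖ρ‖. -/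
/-!
In the Loewner order, a positive semidefinite `A` satisfies `‖A‖ ≤ t ↔ A ≤ t • 1` (for `t ≥ 0`),
since `‖A‖` is its largest eigenvalue. A feasible `σ` has `σ ≤ ‖σ‖ • 1 ≤ (Tr σ) • 1`, hence
`ρ ≤ 1 ⊗ σ ≤ (Tr σ) • 1` and `‖ρ‖ ≤ Tr σ`; conversely `σ = ‖ρ‖ • 1` is feasible, with trace
`|Q| ‖ρ‖`.
-/

open Matrix Kronecker
open scoped ComplexOrder Matrix.Norms.L2Operator

open scoped MatrixOrder

namespace Matrix

theorem one_kronecker_algebraMap {R α m n : Type*} [CommSemiring R] [Semiring α] [Algebra R α]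
    [Fintype m] [Fintype n] [DecidableEq m] [DecidableEq n] (r : R) :
    (1 : Matrix m m α) ⊗ₖ algebraMap R (Matrix n n α) r =
      algebraMap R (Matrix (m × n) (m × n) α) r := by
  rw [Algebra.algebraMap_eq_smul_one, Algebra.algebraMap_eq_smul_one, kronecker_smul,
    one_kronecker_one]

theorem trace_algebraMap {R α n : Type*} [CommSemiring R] [Semiring α] [Algebra R α]
    [Fintype n] [DecidableEq n] (r : R) :
    (algebraMap R (Matrix n n α) r).trace = Fintype.card n • algebraMap R α r := by
  simp [algebraMap_eq_diagonal, trace_diagonal]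

theorem kronecker_le_kronecker_left {𝕜 m n : Type*} [RCLike 𝕜] [Finite m] [Finite n]
    {A : Matrix m m 𝕜} (hA : 0 ≤ A) {B C : Matrix n n 𝕜} (h : B ≤ C) : A ⊗ₖ B ≤ A ⊗ₖ C := by
  have hsub : A ⊗ₖ C - A ⊗ₖ B = A ⊗ₖ (C - B) := by
    rw [sub_eq_iff_eq_add, ← kronecker_add, sub_add_cancel]
  rw [le_iff, hsub]
  exact hA.posSemidef.kronecker (le_iff.mp h)

theorem PosSemidef.norm_le_trace_re {n : Type*} [Fintype n] [DecidableEq n] {A : Matrix n n ℂ}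
    (hA : A.PosSemidef) : ‖A‖ ≤ A.trace.re := by
  cases isEmpty_or_nonempty n
  · simp [Subsingleton.elim A 0]
  obtain ⟨i, hi⟩ : ‖A‖ ∈ Set.range hA.1.eigenvalues := by
    rw [← hA.1.spectrum_real_eq_range_eigenvalues]
    exact CStarAlgebra.norm_mem_spectrum_of_nonneg hA.nonneg
  rw [← hi, hA.1.trace_eq_sum_eigenvalues]
  simpa using Finset.single_le_sum (fun j _ => hA.eigenvalues_nonneg j) (Finset.mem_univ i)

theorem IsHermitian.le_one_kronecker_algebraMap_norm {P Q : Type*} [Fintype P] [Fintype Q]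
    [DecidableEq P] [DecidableEq Q] {ρ : Matrix (P × Q) (P × Q) ℂ} (hρ : ρ.IsHermitian) :
    ρ ≤ (1 : Matrix P P ℂ) ⊗ₖ algebraMap ℝ (Matrix Q Q ℂ) ‖ρ‖ := by
  rw [one_kronecker_algebraMap]
  exact IsSelfAdjoint.le_algebraMap_norm_self hρ

end Matrix

theorem norm_le_trace_re_of_le_one_kronecker {P Q : Type*} [Fintype P] [Fintype Q]
    [DecidableEq P] [DecidableEq Q] {ρ : Matrix (P × Q) (P × Q) ℂ} {σ : Matrix Q Q ℂ}
    (hρ : 0 ≤ ρ) (hσ : 0 ≤ σ) (h : ρ ≤ (1 : Matrix P P ℂ) ⊗ₖ σ) :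
    ‖ρ‖ ≤ σ.trace.re := by
  have hσ_norm : ‖σ‖ ≤ σ.trace.re := hσ.posSemidef.norm_le_trace_re
  have htr : 0 ≤ σ.trace.re := (norm_nonneg σ).trans hσ_norm
  have hσ_le : σ ≤ algebraMap ℝ _ σ.trace.re :=
    (CStarAlgebra.norm_le_iff_le_algebraMap σ htr hσ).mp hσ_norm
  rw [CStarAlgebra.norm_le_iff_le_algebraMap ρ htr hρ, ← one_kronecker_algebraMap]
  exact h.trans (kronecker_le_kronecker_left PosSemidef.one.nonneg hσ_le)

theorem sdp_opNorm_sandwich_general (P Q : Type*)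
    [Fintype P] [Fintype Q] [DecidableEq P] [DecidableEq Q]
    (ρ : Matrix (P × Q) (P × Q) ℂ) (hρ : ρ.PosSemidef) :
    ‖ρ‖ ≤ sdp ρ ∧ sdp ρ ≤ (Fintype.card Q : ℝ) * ‖ρ‖ := by
  unfold sdp
  refine ⟨le_csInf ⟨_, ?feasible⟩ ?lower, csInf_le ⟨_, ?lower⟩ ?feasible⟩
  case lower =>
    rintro _ ⟨σ, hσ, hfeas, rfl⟩
    exact norm_le_trace_re_of_le_one_kronecker hρ.nonneg hσ.nonneg hfeas
  case feasible =>
    refine ⟨algebraMap ℝ _ ‖ρ‖, (algebraMap_nonneg _ (norm_nonneg ρ)).posSemidef,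
      hρ.isHermitian.le_one_kronecker_algebraMap_norm, ?_⟩
    simp [trace_algebraMap]

/-- **Min-entropy–operator-norm sandwich** (Lemma A.1): for a positive semidefinite bipartite
state `ρ` on `P × Q`, the SDP value defining the conditional min-entropy is sandwiched between
the ℓ²-operator norm `‖ρ‖` and `|Q| ⬝ ‖ρ‖`; equivalently
`−log₂ ‖ρ‖ − log₂ |Q| ≤ H_min(P|Q)_ρ ≤ −log₂ ‖ρ‖`. -/
theorem sdp_opNorm_sandwich (P Q : Type*)
    [Fintype P] [Fintype Q] [DecidableEq P] [DecidableEq Q] [Nonempty P] [Nonempty Q]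
    (ρ : Matrix (P × Q) (P × Q) ℂ) (hρ : ρ.PosSemidef) :
    ‖ρ‖ ≤ sdp ρ ∧ sdp ρ ≤ (Fintype.card Q : ℝ) * ‖ρ‖ :=
  sdp_opNorm_sandwich_general P Q ρ hρ
end

section
/- Conditional min-entropy of pure bipartite states (Eq. (eq:pure-min)): let P, Q be nonempty finite types and M : Matrix P Q ℂ. Let ψ : Matrix (P × Q) (P × Q) ℂ be the rank-one matrix ψ (p,q) (p',q') = M p q * star (M p' q'). Then sdp(ψ) = (((hM.sqrt).trace).re)², where hM : (Mᴴ * M).PosSemidef and hM.sqrt denotes the positive semidefinite square root of Mᴴ * M; that is, the SDP value equals the square of the sum of the singular values (Schmidt coefficients) of M, so that H_min(P|Q)_ψ = −2 log₂ (∑ of the singular values of M). -/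
open Matrix Kronecker
open scoped ComplexOrder

/-- The positive semidefinite square root of a positive semidefinite matrix (as in the older
Mathlib, where `Matrix.PosSemidef.sqrt` existed). -/
noncomputable def Matrix.PosSemidef.sqrt {n 𝕜 : Type*} [Fintype n] [DecidableEq n] [RCLike 𝕜]
    {A : Matrix n n 𝕜} (hA : A.PosSemidef) : Matrix n n 𝕜 :=
  hA.1.eigenvectorUnitary.1 * diagonal ((↑) ∘ (√·) ∘ hA.1.eigenvalues) *
  (star hA.1.eigenvectorUnitary : Matrix n n 𝕜)

/-!
Write a vector of `P × Q` as `vec Y` with `Y : Matrix Q P ℂ` and put `N = Mᵀ`; then the constraint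
`1 ⊗ σ ≥ ψ` reads `|Tr (Nᴴ Y)|² ≤ Tr (Yᴴ σ Y)` for all `Y`. Let `S ≥ 0` with `S² = N Nᴴ` (the
transpose of `√(Mᴴ M)`) and `W = S⁺ N`, where `S⁺` is the pseudo-inverse. Then `S W = N`,
`Tr (Nᴴ W) = Tr S` and `W Wᴴ = S S⁺` is an orthogonal projection. Cauchy–Schwarz for the
semi-inner product `Tr (Yᴴ S Z)` makes `σ = (Tr S) • S` feasible, with value `(Tr S)²`; conversely,
testing a feasible `σ` at `Y = W` gives `(Tr S)² ≤ Tr (Wᴴ σ W) ≤ Tr σ`.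
-/

namespace Matrix

section Sqrt
variable {n 𝕜 : Type*} [Fintype n] [DecidableEq n] [RCLike 𝕜] {A : Matrix n n 𝕜}

lemma PosSemidef.sqrt_eq_cfc (hA : A.PosSemidef) : hA.sqrt = cfc Real.sqrt A := by
  rw [hA.isHermitian.cfc_eq]; rfl

open scoped MatrixOrder in
lemma PosSemidef.posSemidef_sqrt (hA : A.PosSemidef) : hA.sqrt.PosSemidef := by
  rw [hA.sqrt_eq_cfc, ← nonneg_iff_posSemidef]
  exact cfc_nonneg fun x _ => Real.sqrt_nonneg x

open scoped MatrixOrder in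
lemma PosSemidef.sqrt_mul_self (hA : A.PosSemidef) : hA.sqrt * hA.sqrt = A := by
  have hc := (Set.toFinite (spectrum ℝ A)).continuousOn Real.sqrt
  rw [hA.sqrt_eq_cfc, ← cfc_mul _ _ A hc hc]
  refine (cfc_congr fun x hx => Real.mul_self_sqrt ?_).trans
    (cfc_id' ℝ A hA.isHermitian.isSelfAdjoint)
  exact spectrum_nonneg_of_nonneg (nonneg_iff_posSemidef.mpr hA) hx

end Sqrt

section PseudoInverse
variable {m n 𝕜 : Type*} [Fintype m] [Fintype n] [DecidableEq n] [RCLike 𝕜] {S : Matrix n n 𝕜}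

/-- Since `0⁻¹ = 0`, this inverts the nonzero eigenvalues of a Hermitian matrix and kills its
kernel: it is the Moore–Penrose pseudo-inverse. -/
noncomputable def hermitianPinv (S : Matrix n n 𝕜) : Matrix n n 𝕜 := cfc (·⁻¹ : ℝ → ℝ) S

lemma isHermitian_hermitianPinv : S.hermitianPinv.IsHermitian :=
  IsSelfAdjoint.isHermitian (cfc_predicate (R := ℝ) _ S)

namespace IsHermitian

lemma commute_hermitianPinv (hS : S.IsHermitian) : Commute S S.hermitianPinv := by
  have h := cfc_commute_cfc (R := ℝ) id (·⁻¹) S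
  rw [cfc_id ℝ S hS.isSelfAdjoint] at h
  exact h

lemma mul_hermitianPinv_mul_self (hS : S.IsHermitian) : S * S.hermitianPinv * S = S := by
  have hc (f : ℝ → ℝ) := (Set.toFinite (spectrum ℝ S)).continuousOn f
  have hid := cfc_id ℝ S hS.isSelfAdjoint
  calc S * S.hermitianPinv * S = cfc id S * cfc (·⁻¹ : ℝ → ℝ) S * cfc id S := by rw [hid]; rfl
    _ = cfc (fun x : ℝ => x * x⁻¹ * x) S := by
      rw [cfc_mul _ _ S (hc _) (hc _), cfc_mul _ _ S (hc _) (hc _)]; rfl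
    _ = S := by simp only [mul_inv_mul_cancel]; exact cfc_id' ℝ S hS.isSelfAdjoint

lemma hermitianPinv_mul_self_mul_self (hS : S.IsHermitian) : S.hermitianPinv * S * S = S := by
  rw [← hS.commute_hermitianPinv.eq, hS.mul_hermitianPinv_mul_self]

lemma isStarProjection_mul_hermitianPinv (hS : S.IsHermitian) :
    IsStarProjection (S * S.hermitianPinv) where
  isIdempotentElem := by rw [IsIdempotentElem, ← Matrix.mul_assoc, hS.mul_hermitianPinv_mul_self]
  isSelfAdjoint := by
    rw [IsSelfAdjoint, star_eq_conjTranspose, conjTranspose_mul, isHermitian_hermitianPinv.eq,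
      hS.eq, hS.commute_hermitianPinv.eq]

variable {N : Matrix n m 𝕜}

lemma mul_hermitianPinv_mul_of_mul_self_eq (hS : S.IsHermitian) (hSN : S * S = N * Nᴴ) :
    S * (S.hermitianPinv * N) = N := by
  have hS0 : (1 - S * S.hermitianPinv) * S = 0 := by
    rw [Matrix.sub_mul, Matrix.one_mul, hS.mul_hermitianPinv_mul_self, sub_self]
  have hN0 : (1 - S * S.hermitianPinv) * (N * Nᴴ) = 0 := by
    rw [← hSN, ← Matrix.mul_assoc, hS0, Matrix.zero_mul]
  rw [mul_self_mul_conjTranspose_eq_zero, Matrix.sub_mul, Matrix.one_mul, sub_eq_zero] at hN0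
  rw [← Matrix.mul_assoc, ← hN0]

lemma trace_conjTranspose_mul_hermitianPinv_mul_of_mul_self_eq (hS : S.IsHermitian)
    (hSN : S * S = N * Nᴴ) :
    (Nᴴ * (S.hermitianPinv * N)).trace = S.trace := by
  rw [trace_mul_comm, Matrix.mul_assoc, ← hSN, ← Matrix.mul_assoc,
    hS.hermitianPinv_mul_self_mul_self]

lemma hermitianPinv_mul_mul_conjTranspose_of_mul_self_eq (hS : S.IsHermitian)
    (hSN : S * S = N * Nᴴ) :
    S.hermitianPinv * N * (S.hermitianPinv * N)ᴴ = S * S.hermitianPinv := by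
  rw [conjTranspose_mul, isHermitian_hermitianPinv.eq, Matrix.mul_assoc, ← Matrix.mul_assoc N,
    ← hSN, ← Matrix.mul_assoc, ← Matrix.mul_assoc, hS.hermitianPinv_mul_self_mul_self]

end IsHermitian

end PseudoInverse

lemma PosSemidef.trace_mul_le_of_isStarProjection {n 𝕜 : Type*} [Fintype n] [DecidableEq n]
    [RCLike 𝕜] {σ p : Matrix n n 𝕜} (hσ : σ.PosSemidef) (hp : IsStarProjection p) :
    (σ * p).trace ≤ σ.trace := by
  have hq := hp.one_sub
  have hpos := (hσ.conjTranspose_mul_mul_same (1 - p)).trace_nonneg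
  rwa [Matrix.mul_assoc, trace_mul_comm, ← star_eq_conjTranspose, hq.isSelfAdjoint.star_eq,
    Matrix.mul_assoc, hq.isIdempotentElem.eq, Matrix.mul_sub, Matrix.mul_one, trace_sub,
    sub_nonneg] at hpos

section WeightedInner
variable {m n 𝕜 : Type*} [Fintype m] [Fintype n] [RCLike 𝕜] {S : Matrix n n 𝕜}

noncomputable abbrev PosSemidef.preInnerProductCore (hS : S.PosSemidef) :
    PreInnerProductSpace.Core 𝕜 (Matrix n m 𝕜) where
  inner Y Z := (Yᴴ * S * Z).trace
  conj_inner_symm Y Z := by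
    rw [starRingEnd_apply, ← trace_conjTranspose]
    simp only [conjTranspose_mul, conjTranspose_conjTranspose, hS.isHermitian.eq, Matrix.mul_assoc]
  re_inner_nonneg Y := (RCLike.nonneg_iff.mp (hS.conjTranspose_mul_mul_same Y).trace_nonneg).1
  add_left Y Z X := by simp only [conjTranspose_add, Matrix.add_mul, trace_add]
  smul_left Y Z r := by
    simp only [conjTranspose_smul, Matrix.smul_mul, trace_smul, smul_eq_mul, starRingEnd_apply]

lemma PosSemidef.norm_trace_conjTranspose_mul_mul_sq_le (hS : S.PosSemidef) (Y Z : Matrix n m 𝕜) :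
    ‖(Yᴴ * S * Z).trace‖ ^ 2 ≤
      RCLike.re (Yᴴ * S * Y).trace * RCLike.re (Zᴴ * S * Z).trace := by
  let _ := hS.preInnerProductCore (m := m)
  have h := InnerProductSpace.Core.inner_mul_inner_self_le (𝕜 := 𝕜) Y Z
  rwa [InnerProductSpace.Core.norm_inner_symm Z Y, ← sq] at h

end WeightedInner

end Matrix

section PureState
variable {P Q : Type*} [Fintype P] [Fintype Q] [DecidableEq P]

/-- `vec` stacks columns, so `vec Mᵀ (p, q) = M p q`. -/
noncomputable def pureState (M : Matrix P Q ℂ) : Matrix (P × Q) (P × Q) ℂ :=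
  vecMulVec (vec Mᵀ) (star (vec Mᵀ))

lemma star_vec_dotProduct_one_kronecker_sub_pureState_mulVec (M : Matrix P Q ℂ)
    (σ : Matrix Q Q ℂ) (Y : Matrix Q P ℂ) :
    star (vec Y) ⬝ᵥ (((1 : Matrix P P ℂ) ⊗ₖ σ - pureState M) *ᵥ vec Y) =
      (Yᴴ * σ * Y).trace - (‖(Mᵀᴴ * Y).trace‖ ^ 2 : ℝ) := by
  rw [sub_mulVec, dotProduct_sub, kronecker_mulVec_vec, transpose_one, Matrix.mul_one,
    star_vec_dotProduct_vec, pureState, vecMulVec_mulVec]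
  have h : (Yᴴ * Mᵀ).trace = star (Mᵀᴴ * Y).trace := by
    rw [← trace_conjTranspose, conjTranspose_mul, conjTranspose_conjTranspose]
  simp [star_vec_dotProduct_vec, h, Complex.mul_conj', Matrix.mul_assoc]

lemma posSemidef_one_kronecker_sub_pureState_iff {M : Matrix P Q ℂ} {σ : Matrix Q Q ℂ}
    (hσ : σ.PosSemidef) :
    ((1 : Matrix P P ℂ) ⊗ₖ σ - pureState M).PosSemidef ↔
      ∀ Y : Matrix Q P ℂ, ‖(Mᵀᴴ * Y).trace‖ ^ 2 ≤ (Yᴴ * σ * Y).trace.re := by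
  have hH : ((1 : Matrix P P ℂ) ⊗ₖ σ - pureState M).IsHermitian :=
    (PosSemidef.one.kronecker hσ).isHermitian.sub (posSemidef_vecMulVec_self_star _).isHermitian
  rw [posSemidef_iff_dotProduct_mulVec, and_iff_right hH, vec_bijective.surjective.forall]
  refine forall_congr' fun Y => ?_
  obtain ⟨r, -, hr⟩ :=
    RCLike.nonneg_iff_exists_ofReal.mp (hσ.conjTranspose_mul_mul_same Y).trace_nonneg
  rw [star_vec_dotProduct_one_kronecker_sub_pureState_mulVec, ← hr]
  simp only [Complex.coe_algebraMap, Complex.ofReal_pow, sub_nonneg, Complex.ofReal_re]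
  norm_cast

variable [DecidableEq Q]

lemma posSemidef_one_kronecker_trace_smul_sub_pureState {M : Matrix P Q ℂ} {S : Matrix Q Q ℂ}
    (hS : S.PosSemidef) (hSM : S * S = Mᵀ * Mᵀᴴ) :
    ((1 : Matrix P P ℂ) ⊗ₖ (S.trace • S) - pureState M).PosSemidef := by
  rw [posSemidef_one_kronecker_sub_pureState_iff (hS.smul hS.trace_nonneg)]
  intro Y
  set W := S.hermitianPinv * Mᵀ
  have hMW : Mᵀᴴ = Wᴴ * S := by
    rw [← hS.isHermitian.mul_hermitianPinv_mul_of_mul_self_eq hSM, conjTranspose_mul,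
      hS.isHermitian.eq]
  have hWSW : (Wᴴ * S * W).trace = S.trace := by
    rw [Matrix.mul_assoc, hS.isHermitian.mul_hermitianPinv_mul_of_mul_self_eq hSM,
      ← conjTranspose_conjTranspose Mᵀ, ← conjTranspose_mul, trace_conjTranspose,
      hS.isHermitian.trace_conjTranspose_mul_hermitianPinv_mul_of_mul_self_eq hSM,
      ← trace_conjTranspose, hS.isHermitian.eq]
  calc ‖(Mᵀᴴ * Y).trace‖ ^ 2 = ‖(Wᴴ * S * Y).trace‖ ^ 2 := by rw [hMW]
    _ ≤ (Wᴴ * S * W).trace.re * (Yᴴ * S * Y).trace.re :=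
      hS.norm_trace_conjTranspose_mul_mul_sq_le W Y
    _ = (Yᴴ * (S.trace • S) * Y).trace.re := by
      rw [hWSW, Matrix.mul_smul, Matrix.smul_mul, trace_smul, smul_eq_mul,
        Complex.eq_coe_norm_of_nonneg hS.trace_nonneg, Complex.re_ofReal_mul, Complex.ofReal_re]

lemma re_trace_sq_le_of_posSemidef_one_kronecker_sub_pureState {M : Matrix P Q ℂ}
    {S σ : Matrix Q Q ℂ} (hS : S.PosSemidef) (hSM : S * S = Mᵀ * Mᵀᴴ) (hσ : σ.PosSemidef)
    (h : ((1 : Matrix P P ℂ) ⊗ₖ σ - pureState M).PosSemidef) :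
    S.trace.re ^ 2 ≤ σ.trace.re := by
  set W := S.hermitianPinv * Mᵀ
  have hfeas := (posSemidef_one_kronecker_sub_pureState_iff hσ).mp h W
  rw [hS.isHermitian.trace_conjTranspose_mul_hermitianPinv_mul_of_mul_self_eq hSM] at hfeas
  have hWσW : (Wᴴ * σ * W).trace ≤ σ.trace := by
    rw [trace_mul_comm, ← Matrix.mul_assoc, trace_mul_comm,
      hS.isHermitian.hermitianPinv_mul_mul_conjTranspose_of_mul_self_eq hSM]
    exact hσ.trace_mul_le_of_isStarProjection hS.isHermitian.isStarProjection_mul_hermitianPinv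
  rw [Complex.re_eq_norm.mpr hS.trace_nonneg]
  exact hfeas.trans (RCLike.re_le_re hWσW)

theorem sdp_pureState (M : Matrix P Q ℂ) {S : Matrix Q Q ℂ} (hS : S.PosSemidef)
    (hSM : S * S = Mᴴ * M) : sdp (pureState M) = S.trace.re ^ 2 := by
  have hSMT : Sᵀ * Sᵀ = Mᵀ * Mᵀᴴ := by rw [← transpose_mul, hSM, transpose_mul]; rfl
  rw [← trace_transpose S]
  refine IsLeast.csInf_eq ⟨⟨Sᵀ.trace • Sᵀ, hS.transpose.smul hS.transpose.trace_nonneg,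
    posSemidef_one_kronecker_trace_smul_sub_pureState hS.transpose hSMT, ?_⟩, ?_⟩
  · rw [trace_smul, smul_eq_mul, Complex.eq_coe_norm_of_nonneg hS.transpose.trace_nonneg,
      ← Complex.ofReal_mul, Complex.ofReal_re, Complex.ofReal_re, sq]
  · rintro x ⟨σ, hσ, h, rfl⟩
    exact re_trace_sq_le_of_posSemidef_one_kronecker_sub_pureState hS.transpose hSMT hσ h

end PureState

theorem sdp_pure_state_general (P Q : Type*)
    [Fintype P] [Fintype Q] [DecidableEq P] [DecidableEq Q]
    (M : Matrix P Q ℂ)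
    (ψ : Matrix (P × Q) (P × Q) ℂ)
    (hψ : ∀ p q p' q', ψ (p, q) (p', q') = M p q * star (M p' q'))
    (hM : (Mᴴ * M).PosSemidef) :
    sdp ψ = ((hM.sqrt.trace).re) ^ 2 := by
  have hψM : ψ = pureState M := by
    ext ⟨p, q⟩ ⟨p', q'⟩
    rw [hψ, pureState, vecMulVec_apply]
    rfl
  rw [hψM]
  exact sdp_pureState M hM.posSemidef_sqrt hM.sqrt_mul_self

/-- **Conditional min-entropy of pure bipartite states** (Eq. (eq:pure-min)): for the rank-one
state `ψ = |M⟩⟨M|` built from a coefficient matrix `M : Matrix P Q ℂ`, the SDP value equals the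
square of the sum of the singular values (Schmidt coefficients) of `M`, i.e. the square of the
trace of the positive semidefinite square root of `Mᴴ * M`; hence
`H_min(P|Q)_ψ = −2 log₂ (∑ singular values of M)`. -/
theorem sdp_pure_state (P Q : Type*)
    [Fintype P] [Fintype Q] [DecidableEq P] [DecidableEq Q] [Nonempty P] [Nonempty Q]
    (M : Matrix P Q ℂ)
    (ψ : Matrix (P × Q) (P × Q) ℂ)
    (hψ : ∀ p q p' q', ψ (p, q) (p', q') = M p q * star (M p' q'))
    (hM : (Mᴴ * M).PosSemidef) :
    sdp ψ = ((hM.sqrt.trace).re) ^ 2 :=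
  sdp_pure_state_general P Q M ψ hψ hM
end

section
/- Closed form for the average-state coefficients β_i (Appendix C.1): let n, t, k, α, i be natural numbers with t ≤ n, α + k ≤ n, i ≤ t and i ≤ α. Then, in ℚ, ∑_{j=0}^{k} 2^{−k} * (k.choose j) * ((n−t).choose (j+α−i)) / (n.choose (j+α)) = ((descPochhammer ℚ t).eval (n : ℚ))⁻¹ * ∑_{x=0}^{i} ∑_{y=0}^{t−i} 2^{−(x+y)} * (−1)^y * ((descPochhammer ℚ (x+y)).eval (k : ℚ)) * (i.choose x) * ((t−i).choose y) * ((descPochhammer ℚ (i−x)).eval (α : ℚ)) * ((descPochhammer ℚ (t−i−y)).eval ((n : ℚ) − α − x − y)). -/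
/-!
With `J = j + α`, the ratio `C(n−t, J−i) / C(n, J)` equals `J^(i) (n−J)^(t−i) / n^(t)` in falling
factorials. Expand `(j + α)^(i)` by the Chu–Vandermonde identity and
`(n−α−j)^(t−i) = ((n−α−x) − (j−x))^(t−i)` by its reflected form; since
`j^(x) (j−x)^(y) = j^(x+y)`, the sum over `j` collapses to the factorial moments
`2^(−k) ∑_j C(k,j) j^(r) = 2^(−r) k^(r)` of the binomial law `Bin(k, 1/2)`.
-/

open Finset Polynomial
open scoped Nat

variable {R : Type*} [CommRing R]

theorem descPochhammer_eval_eq_smeval (k : ℕ) (r : R) :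
    (descPochhammer R k).eval r = (descPochhammer ℤ k).smeval r := by
  rw [← descPochhammer_map (Int.castRingHom R), eval_map, ← algebraMap_int_eq, ← aeval_def,
    aeval_eq_smeval]

theorem descPochhammer_eval_add (r : ℕ) (a b : R) :
    (descPochhammer R r).eval (a + b) =
      ∑ x ∈ range (r + 1), (r.choose x : R) * (descPochhammer R x).eval a *
        (descPochhammer R (r - x)).eval b := by
  simp only [descPochhammer_eval_eq_smeval, Ring.descPochhammer_smeval_add r (Commute.all a b),
    Nat.sum_antidiagonal_eq_sum_range_succ_mk, mul_assoc]

theorem descPochhammer_eval_neg (p : ℕ) (z : R) :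
    (descPochhammer R p).eval (-z) = (-1) ^ p * (descPochhammer R p).eval (z + p - 1) := by
  rw [descPochhammer_eval_eq_ascPochhammer, show -z - p + 1 = -(z + p - 1) by ring,
    ascPochhammer_eval_neg_eq_descPochhammer]

theorem descPochhammer_eval_mul_eval_sub (x y : ℕ) (a : R) :
    (descPochhammer R x).eval a * (descPochhammer R y).eval (a - x) =
      (descPochhammer R (x + y)).eval a := by
  rw [← descPochhammer_mul, eval_mul, eval_comp]
  simp

theorem descPochhammer_eval_sub (r : ℕ) (a m : R) :
    (descPochhammer R r).eval (a - m) =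
      ∑ y ∈ range (r + 1), (r.choose y : R) * (-1) ^ y * (descPochhammer R y).eval m *
        (descPochhammer R (r - y)).eval (a - y) := by
  -- reflect, apply Vandermonde, and reflect each factor back
  rw [show a - m = -(m - a) by ring, descPochhammer_eval_neg,
    show m - a + r - 1 = m + (r - 1 - a) by ring, descPochhammer_eval_add, mul_sum]
  refine sum_congr rfl fun y hy => ?_
  have hyr : y ≤ r := Nat.lt_succ_iff.mp (mem_range.mp hy)
  have hsign : ((-1) ^ r : R) = (-1) ^ y * (-1) ^ (r - y) := by
    rw [← pow_add, Nat.add_sub_cancel' hyr]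
  rw [show (r : R) - 1 - a = -(a - y - (r - y : ℕ) + 1) by push_cast [Nat.cast_sub hyr]; ring,
    descPochhammer_eval_neg, show a - y - (r - y : ℕ) + 1 + (r - y : ℕ) - 1 = a - y by ring,
    hsign]
  have hsq : ((-1) ^ (r - y) : R) * (-1) ^ (r - y) = 1 := by rw [← mul_pow]; simp
  linear_combination ((r.choose y : R) * (-1) ^ y * (descPochhammer R y).eval m *
    (descPochhammer R (r - y)).eval (a - y)) * hsq

theorem descPochhammer_eval_add_mul_eval_sub (i r : ℕ) (a c b : R) :
    (descPochhammer R i).eval (a + c) * (descPochhammer R r).eval (b - a) =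
      ∑ x ∈ range (i + 1), ∑ y ∈ range (r + 1), (descPochhammer R (x + y)).eval a *
        ((i.choose x : R) * (r.choose y : R) * (-1) ^ y * (descPochhammer R (i - x)).eval c *
          (descPochhammer R (r - y)).eval (b - x - y)) := by
  rw [descPochhammer_eval_add, sum_mul]
  refine sum_congr rfl fun x _ => ?_
  rw [show b - a = (b - x) - (a - x) by ring, descPochhammer_eval_sub, mul_sum]
  refine sum_congr rfl fun y _ => ?_
  rw [← descPochhammer_eval_mul_eval_sub x y]
  ring

theorem Nat.sum_range_choose_mul_descFactorial (K r : ℕ) :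
    ∑ j ∈ range (K + 1), K.choose j * j.descFactorial r = K.descFactorial r * 2 ^ (K - r) := by
  induction r generalizing K with
  | zero => simp [Nat.sum_range_choose]
  | succ r ih =>
    cases K with
    | zero => simp
    | succ K =>
      have absorb : ∀ j, (K + 1).choose (j + 1) * (j + 1).descFactorial (r + 1) =
          (K + 1) * (K.choose j * j.descFactorial r) := by
        intro j
        rw [Nat.succ_descFactorial_succ, ← mul_assoc, ← Nat.add_one_mul_choose_eq, mul_assoc]
      rw [sum_range_succ', Nat.zero_descFactorial_succ, mul_zero, add_zero]
      simp only [absorb]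
      rw [← mul_sum, ih, Nat.succ_descFactorial_succ, Nat.succ_sub_succ, mul_assoc]

section CharZero

variable {F : Type*} [Field F] [CharZero F]

theorem sum_two_zpow_neg_mul_choose_mul_descPochhammer_eval (K r : ℕ) :
    ∑ j ∈ range (K + 1), (2 : F) ^ (-(K : ℤ)) * K.choose j * (descPochhammer F r).eval (j : F) =
      (2 : F) ^ (-(r : ℤ)) * (descPochhammer F r).eval (K : F) := by
  simp only [descPochhammer_eval_eq_descFactorial, mul_assoc, ← mul_sum, ← Nat.cast_mul,
    ← Nat.cast_sum, Nat.sum_range_choose_mul_descFactorial]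
  rcases le_or_gt r K with hrK | hKr
  · rw [Nat.cast_mul, Nat.cast_pow, Nat.cast_two, mul_left_comm, ← zpow_natCast,
      ← zpow_add₀ two_ne_zero, Nat.cast_sub hrK]
    ring_nf
  · simp [Nat.descFactorial_eq_zero_iff_lt.mpr hKr]

theorem choose_sub_div_choose_eq {n t i J : ℕ} (ht : t ≤ n) (hJ : J ≤ n) (hiJ : i ≤ J)
    (hit : i ≤ t) :
    ((n - t).choose (J - i) : F) / n.choose J =
      (descPochhammer F i).eval (J : F) * (descPochhammer F (t - i)).eval ((n : F) - J) /
        (descPochhammer F t).eval (n : F) := by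
  have hfac : ∀ {m k : ℕ}, k ≤ m → (m.descFactorial k : F) = m ! / (m - k)! := fun h => by
    rw [eq_div_iff (Nat.cast_ne_zero.mpr (Nat.factorial_ne_zero _)), ← Nat.cast_mul, mul_comm,
      Nat.factorial_mul_descFactorial h]
  rw [← Nat.cast_sub hJ]
  simp only [descPochhammer_eval_eq_descFactorial]
  rcases le_or_gt (J - i) (n - t) with hc | hc
  · rw [Nat.cast_choose F hc, Nat.cast_choose F hJ, hfac hiJ, hfac (by omega : t - i ≤ n - J),
      hfac ht, show n - t - (J - i) = n - J - (t - i) by omega]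
    field_simp
  · rw [Nat.choose_eq_zero_of_lt hc,
      Nat.descFactorial_eq_zero_iff_lt.mpr (by omega : n - J < t - i)]
    simp

end CharZero

/-- **Closed form for the average-state coefficients β_i** (Appendix C.1): the eigenvalue
`β_i = 2^{-k} ∑_{j=0}^{k} C(k,j) C(n−t, j+α−i)/C(n, j+α)` of the marginal of the average encoded
state of the `(n,k;α)`-`U(1)` random code rewrites as a finite double sum of falling factorials. -/
theorem beta_closed_form (n t k α i : ℕ)
    (ht : t ≤ n) (hαk : α + k ≤ n) (hit : i ≤ t) (hiα : i ≤ α) :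
    ∑ j ∈ Finset.range (k + 1),
        (2 : ℚ) ^ (-(k : ℤ)) * (k.choose j : ℚ) * ((n - t).choose (j + α - i) : ℚ) /
          ((n.choose (j + α) : ℕ) : ℚ) =
      ((descPochhammer ℚ t).eval (n : ℚ))⁻¹ *
        ∑ x ∈ Finset.range (i + 1), ∑ y ∈ Finset.range (t - i + 1),
          (2 : ℚ) ^ (-((x + y : ℕ) : ℤ)) * (-1 : ℚ) ^ y *
            ((descPochhammer ℚ (x + y)).eval (k : ℚ)) *
            (i.choose x : ℚ) * ((t - i).choose y : ℚ) *
            ((descPochhammer ℚ (i - x)).eval (α : ℚ)) *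
            ((descPochhammer ℚ (t - i - y)).eval ((n : ℚ) - (α : ℚ) - (x : ℚ) - (y : ℚ))) := by
  have hterm : ∀ j ∈ range (k + 1),
      (2 : ℚ) ^ (-(k : ℤ)) * (k.choose j : ℚ) * ((n - t).choose (j + α - i) : ℚ) /
          ((n.choose (j + α) : ℕ) : ℚ) =
        ((descPochhammer ℚ t).eval (n : ℚ))⁻¹ *
          ∑ x ∈ range (i + 1), ∑ y ∈ range (t - i + 1),
            (2 : ℚ) ^ (-(k : ℤ)) * k.choose j * (descPochhammer ℚ (x + y)).eval (j : ℚ) *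
              ((i.choose x : ℚ) * ((t - i).choose y : ℚ) * (-1) ^ y *
                (descPochhammer ℚ (i - x)).eval (α : ℚ) *
                (descPochhammer ℚ (t - i - y)).eval ((n : ℚ) - α - x - y)) := by
    intro j hj
    have hjk : j ≤ k := Nat.lt_succ_iff.mp (mem_range.mp hj)
    rw [mul_div_assoc, choose_sub_div_choose_eq ht (by omega) (by omega) hit, Nat.cast_add,
      show (n : ℚ) - (j + α) = n - α - j by ring, descPochhammer_eval_add_mul_eval_sub,
      div_eq_inv_mul, mul_left_comm, mul_sum]
    refine congrArg _ (sum_congr rfl fun x _ => ?_)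
    rw [mul_sum]
    exact sum_congr rfl fun y _ => by ring
  rw [sum_congr rfl hterm, ← mul_sum]
  congr 1
  rw [sum_comm]
  refine sum_congr rfl fun x _ => ?_
  rw [sum_comm]
  refine sum_congr rfl fun y _ => ?_
  rw [← sum_mul, sum_two_zpow_neg_mul_choose_mul_descPochhammer_eval]
  ring
end

section
/- Reduced state of the normalized Hamming-weight projector (the average state ρ^{x,x}_avg, Appendices B.2/C.2): let n, t, w : ℕ with t ≤ n and w ≤ n, and define M : Matrix ((Fin t → Bool) × (Fin (n−t) → Bool)) ((Fin t → Bool) × (Fin (n−t) → Bool)) ℂ by M (f,g) (f',g') = if (f,g) = (f',g') ∧ wt f + wt g = w then ((n.choose w : ℂ))⁻¹ else 0 (the projector onto total Hamming weight w, normalized by C(n,w)). Then for all f f' : Fin t → Bool, ∑ g : Fin (n−t) → Bool, M (f,g) (f',g) = if f = f' ∧ wt f ≤ w then ((n−t).choose (w − wt f) : ℂ) / (n.choose w) else 0. -/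
/-! Off the diagonal every summand vanishes. On the diagonal at `f`, the summand for `g` is
`C(n, w)⁻¹` exactly when `wt g = w - wt f` (possible only if `wt f ≤ w`), and basis states of
weight `k` on `m` qubits correspond to their supports, the `k`-subsets of `Fin m`. -/

open Matrix

open Finset

theorem card_filter_wt_eq (m k : ℕ) : #{g : Fin m → Bool | wt g = k} = m.choose k := by
  calc #{g : Fin m → Bool | wt g = k}
      = #((univ : Finset (Fin m)).powersetCard k) := by
        refine card_bij' (fun g _ => univ.filter (g · = true)) (fun s _ i => i ∈ s)
          ?_ ?_ ?_ ?_
        · intro g hg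
          exact mem_powersetCard.2 ⟨subset_univ _, (mem_filter.1 hg).2⟩
        · intro s hs
          rw [mem_filter]
          simpa [wt] using hs
        · intro g _
          simp
        · intro s _
          simp
    _ = m.choose k := by simp

theorem card_filter_add_wt_eq (a w m : ℕ) :
    #{g : Fin m → Bool | a + wt g = w} = if a ≤ w then m.choose (w - a) else 0 := by
  split_ifs with h
  · rw [← card_filter_wt_eq]
    congr 1
    exact filter_congr fun g _ => by omega
  · rw [card_eq_zero, filter_eq_empty_iff]
    intro g _
    omega

theorem reduced_weight_projector_general (n t w : ℕ)
    (M : Matrix ((Fin t → Bool) × (Fin (n - t) → Bool))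
      ((Fin t → Bool) × (Fin (n - t) → Bool)) ℂ)
    (hM : ∀ f g f' g', M (f, g) (f', g') =
      if (f, g) = (f', g') ∧ wt f + wt g = w then ((n.choose w : ℕ) : ℂ)⁻¹ else 0)
    (f f' : Fin t → Bool) :
    ∑ g : Fin (n - t) → Bool, M (f, g) (f', g) =
      if f = f' ∧ wt f ≤ w then
        (((n - t).choose (w - wt f) : ℕ) : ℂ) / ((n.choose w : ℕ) : ℂ)
      else 0 := by
  simp only [hM, Prod.mk.injEq, and_true]
  rw [sum_ite, sum_const_zero, add_zero, sum_const, nsmul_eq_mul]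
  by_cases hf : f = f'
  · subst hf
    simp only [true_and]
    rw [card_filter_add_wt_eq]
    split_ifs <;> simp [div_eq_mul_inv]
  · simp [hf]

/-- **Reduced state of the normalized Hamming-weight projector** (the average state
`ρ^{x,x}_avg`, Appendices B.2/C.2): tracing the normalized projector onto total Hamming weight
`w` of `n` qubits over the last `n − t` qubits yields the diagonal `t`-qubit state
`∑_i [C(n−t, w−i)/C(n,w)] Π_i`. -/
theorem reduced_weight_projector (n t w : ℕ) (ht : t ≤ n) (hw : w ≤ n)
    (M : Matrix ((Fin t → Bool) × (Fin (n - t) → Bool))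
      ((Fin t → Bool) × (Fin (n - t) → Bool)) ℂ)
    (hM : ∀ f g f' g', M (f, g) (f', g') =
      if (f, g) = (f', g') ∧ wt f + wt g = w then ((n.choose w : ℕ) : ℂ)⁻¹ else 0)
    (f f' : Fin t → Bool) :
    ∑ g : Fin (n - t) → Bool, M (f, g) (f', g) =
      if f = f' ∧ wt f ≤ w then
        (((n - t).choose (w - wt f) : ℕ) : ℂ) / ((n.choose w : ℕ) : ℂ)
      else 0 :=
  reduced_weight_projector_general n t w M hM f f'
end

section
/- Matrices commuting with all collective unitaries have maximally mixed single-site marginals (step in Appendix D): let d ≥ 1 and m' : ℕ, and let ρ : Matrix (Fin (m'+1) → Fin d) (Fin (m'+1) → Fin d) ℂ have trace 1 and satisfy ρ * tp (m'+1) ↑W = tp (m'+1) ↑W * ρ for every W ∈ Matrix.unitaryGroup (Fin d) ℂ. Then for all x y : Fin d, ∑ h : Fin m' → Fin d, ρ (Fin.cons x h) (Fin.cons y h) = if x = y then (1/d : ℂ) else 0. -/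
/-!
Reindex `ρ` along `Fin.consEquiv` as a matrix on `ℂ^d ⊗ (ℂ^d)^{⊗m'}`; then `W^{⊗(m'+1)}` becomes
`W ⊗ W^{⊗m'}` and the marginal at site `0` is the partial trace over the second factor. The partial
trace is a bimodule map for `A ⊗ 1` and is cyclic for `1 ⊗ B`, so commuting with `W ⊗ B` for an
invertible `B` descends to the marginal commuting with `W`. A matrix commuting with every unitary
is scalar (diagonal sign flips kill the off-diagonal entries, transpositions equalize the
diagonal ones), and the trace condition fixes the scalar to `1/d`.
-/

open Matrix

open scoped Kronecker

namespace Matrix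

section PartialTrace

variable {R n k : Type*} [Fintype k]

def traceRight [AddCommMonoid R] (X : Matrix (n × k) (n × k) R) : Matrix n n R :=
  of fun i j => ∑ h, X (i, h) (j, h)

@[simp]
theorem traceRight_apply [AddCommMonoid R] (X : Matrix (n × k) (n × k) R) (i j : n) :
    traceRight X i j = ∑ h, X (i, h) (j, h) :=
  rfl

variable [Fintype n]

theorem trace_traceRight [AddCommMonoid R] (X : Matrix (n × k) (n × k) R) :
    trace (traceRight X) = trace X := by
  simp only [trace, diag_apply, traceRight_apply, Fintype.sum_prod_type]

theorem traceRight_kronecker_one_mul [Semiring R] [DecidableEq k] (A : Matrix n n R)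
    (X : Matrix (n × k) (n × k) R) :
    traceRight ((A ⊗ₖ (1 : Matrix k k R)) * X) = A * traceRight X := by
  ext i j
  simp only [traceRight_apply, mul_apply, kroneckerMap_apply, one_apply, mul_ite, mul_one,
    mul_zero, ite_mul, zero_mul, Fintype.sum_prod_type, Finset.sum_ite_eq, Finset.mem_univ,
    if_true, Finset.mul_sum]
  exact Finset.sum_comm

theorem traceRight_mul_kronecker_one [Semiring R] [DecidableEq k] (A : Matrix n n R)
    (X : Matrix (n × k) (n × k) R) :
    traceRight (X * (A ⊗ₖ (1 : Matrix k k R))) = traceRight X * A := by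
  ext i j
  simp only [traceRight_apply, mul_apply, kroneckerMap_apply, one_apply, mul_ite, mul_one,
    mul_zero, Fintype.sum_prod_type, Finset.sum_ite_eq', Finset.mem_univ, if_true,
    Finset.sum_mul]
  exact Finset.sum_comm

theorem traceRight_one_kronecker_mul [CommSemiring R] [DecidableEq n] (B : Matrix k k R)
    (X : Matrix (n × k) (n × k) R) :
    traceRight (((1 : Matrix n n R) ⊗ₖ B) * X) = traceRight (X * ((1 : Matrix n n R) ⊗ₖ B)) := by
  ext i j
  simp only [traceRight_apply, mul_apply, kroneckerMap_apply, one_apply, ite_mul, one_mul,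
    zero_mul, mul_ite, mul_zero, Fintype.sum_prod_type, Finset.sum_ite_irrel,
    Finset.sum_const_zero, Finset.sum_ite_eq, Finset.sum_ite_eq', Finset.mem_univ, if_true]
  rw [Finset.sum_comm]
  simp_rw [mul_comm]

theorem commute_traceRight_of_commute_kronecker [CommSemiring R] [DecidableEq n] [DecidableEq k]
    {X : Matrix (n × k) (n × k) R} {A : Matrix n n R} {B : Matrix k k R} (hB : IsUnit B)
    (hX : Commute X (A ⊗ₖ B)) : Commute (traceRight X) A := by
  obtain ⟨u, rfl⟩ := hB
  have hsplit : A ⊗ₖ (u : Matrix k k R) = (A ⊗ₖ 1) * (1 ⊗ₖ (u : Matrix k k R)) := by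
    rw [← mul_kronecker_mul, mul_one, one_mul]
  have hcancel : ∀ C D : Matrix k k R, C * D = 1 →
      ((1 : Matrix n n R) ⊗ₖ C) * (1 ⊗ₖ D) = 1 := fun C D h => by
    rw [← mul_kronecker_mul, mul_one, h, one_kronecker_one]
  have hconj : X * (A ⊗ₖ 1) = (A ⊗ₖ 1) * ((1 ⊗ₖ (u : Matrix k k R)) * X * (1 ⊗ₖ ↑u⁻¹)) := by
    have := congrArg (· * ((1 : Matrix n n R) ⊗ₖ ↑u⁻¹)) hX.eq
    simp only [hsplit, mul_assoc, hcancel _ _ u.mul_inv, mul_one] at this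
    simpa only [mul_assoc] using this
  calc traceRight X * A = traceRight (X * (A ⊗ₖ 1)) := (traceRight_mul_kronecker_one A X).symm
    _ = A * traceRight ((1 ⊗ₖ (u : Matrix k k R)) * (X * (1 ⊗ₖ ↑u⁻¹))) := by
      rw [hconj, traceRight_kronecker_one_mul, mul_assoc]
    _ = A * traceRight X := by
      rw [traceRight_one_kronecker_mul, mul_assoc, hcancel _ _ u.inv_mul, mul_one]

end PartialTrace

section UnitaryCommutant

variable {𝕜 n : Type*} [RCLike 𝕜] [Fintype n] [DecidableEq n]

theorem apply_eq_zero_of_forall_unitary_commute {M : Matrix n n 𝕜}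
    (hM : ∀ W ∈ unitaryGroup n 𝕜, Commute M W) {i j : n} (hij : i ≠ j) : M i j = 0 := by
  set v : n → 𝕜 := fun l => if l = i then -1 else 1
  have hv : diagonal v ∈ unitaryGroup n 𝕜 := by
    rw [mem_unitaryGroup_iff, star_eq_conjTranspose, diagonal_conjTranspose,
      diagonal_mul_diagonal, ← diagonal_one]
    congr 1
    ext l
    by_cases hl : l = i <;> simp [v, hl]
  have h := congrFun₂ (hM _ hv).eq i j
  simp only [mul_diagonal, diagonal_mul, v, if_neg hij.symm, if_true, mul_one,
    neg_one_mul] at h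
  exact CharZero.eq_neg_self_iff.mp h

theorem apply_self_eq_of_forall_unitary_commute {M : Matrix n n 𝕜}
    (hM : ∀ W ∈ unitaryGroup n 𝕜, Commute M W) (i j : n) : M i i = M j j := by
  set σ := Equiv.swap i j
  have hσ : σ.permMatrix 𝕜 ∈ unitaryGroup n 𝕜 := by
    rw [mem_unitaryGroup_iff', star_eq_conjTranspose, conjTranspose_permMatrix,
      ← permMatrix_mul, mul_inv_cancel, permMatrix_one]
  have h := congrFun₂ (hM _ hσ).eq i j
  simpa [PEquiv.toMatrix_toPEquiv_mul, PEquiv.mul_toMatrix_toPEquiv, σ] using h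

theorem exists_eq_scalar_of_forall_unitary_commute {M : Matrix n n 𝕜}
    (hM : ∀ W ∈ unitaryGroup n 𝕜, Commute M W) : ∃ c, M = scalar n c := by
  rcases isEmpty_or_nonempty n with hn | ⟨⟨i₀⟩⟩
  · exact ⟨0, Subsingleton.elim _ _⟩
  · refine ⟨M i₀ i₀, ext fun i j => ?_⟩
    rw [scalar_apply, diagonal_apply]
    split_ifs with hij
    · rw [hij, apply_self_eq_of_forall_unitary_commute hM j i₀]
    · exact apply_eq_zero_of_forall_unitary_commute hM hij

end UnitaryCommutant

end Matrix

section TensorPower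

variable {d : ℕ}

theorem tp_mul (m : ℕ) (A B : Matrix (Fin d) (Fin d) ℂ) : tp m (A * B) = tp m A * tp m B := by
  ext f g
  simp only [tp, mul_apply, of_apply, Fintype.prod_sum, Finset.prod_mul_distrib]

theorem tp_one (m : ℕ) : tp m (1 : Matrix (Fin d) (Fin d) ℂ) = 1 := by
  ext f g
  simp [tp, one_apply, Fintype.prod_boole, ← funext_iff]

def tpMonoidHom (d m : ℕ) :
    Matrix (Fin d) (Fin d) ℂ →* Matrix (Fin m → Fin d) (Fin m → Fin d) ℂ where
  toFun := tp m
  map_one' := tp_one m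
  map_mul' := tp_mul m

theorem isUnit_tp (m : ℕ) {W : Matrix (Fin d) (Fin d) ℂ} (hW : IsUnit W) : IsUnit (tp m W) :=
  hW.map (tpMonoidHom d m)

theorem tp_succ_submatrix_consEquiv (m : ℕ) (W : Matrix (Fin d) (Fin d) ℂ) :
    (tp (m + 1) W).submatrix (Fin.consEquiv _) (Fin.consEquiv _) = W ⊗ₖ tp m W := by
  ext p q
  simp [tp, Fin.prod_univ_succ, kroneckerMap_apply, Fin.consEquiv]

end TensorPower

theorem collective_invariant_marginal_general (d m' : ℕ)
    (ρ : Matrix (Fin (m' + 1) → Fin d) (Fin (m' + 1) → Fin d) ℂ)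
    (hρtr : ρ.trace = 1)
    (hρcomm : ∀ W ∈ Matrix.unitaryGroup (Fin d) ℂ, ρ * tp (m' + 1) W = tp (m' + 1) W * ρ)
    (x y : Fin d) :
    ∑ h : Fin m' → Fin d, ρ (Fin.cons x h) (Fin.cons y h) =
      if x = y then (1 / (d : ℂ)) else 0 := by
  set e := Fin.consEquiv fun _ : Fin (m' + 1) => Fin d
  set M := traceRight (ρ.submatrix e e)
  have hM : ∀ W ∈ unitaryGroup (Fin d) ℂ, Commute M W := fun W hW => by
    refine commute_traceRight_of_commute_kronecker
      (isUnit_tp m' (Unitary.isUnit_coe (U := ⟨W, hW⟩))) ?_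
    rw [← tp_succ_submatrix_consEquiv]
    exact (submatrix_mul_equiv ..).trans <| (congrArg (submatrix · e e) (hρcomm W hW)).trans
      (submatrix_mul_equiv ..).symm
  obtain ⟨c, hc⟩ := exists_eq_scalar_of_forall_unitary_commute hM
  have hdc : (d : ℂ) * c = 1 := by
    have htrace : trace (ρ.submatrix e e) = trace ρ := e.sum_comp fun F => ρ F F
    calc (d : ℂ) * c = trace (scalar (Fin d) c) := by simp [scalar_apply, trace_diagonal]
      _ = trace ρ := by rw [← hc, trace_traceRight, htrace]
      _ = 1 := hρtr
  change M x y = _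
  rw [hc, scalar_apply, diagonal_apply, eq_one_div_of_mul_eq_one_right hdc]

/-- **Matrices commuting with all collective unitaries have maximally mixed single-site
marginals** (step in Appendix D): if a trace-one matrix `ρ` on `m' + 1` qudits commutes with
every collective unitary `W^{⊗(m'+1)}`, then its single-site marginal at site `0` is `(1/d)·I`
(by Schur's lemma). -/
theorem collective_invariant_marginal (d m' : ℕ) (hd : 1 ≤ d)
    (ρ : Matrix (Fin (m' + 1) → Fin d) (Fin (m' + 1) → Fin d) ℂ)
    (hρtr : ρ.trace = 1)
    (hρcomm : ∀ W ∈ Matrix.unitaryGroup (Fin d) ℂ, ρ * tp (m' + 1) W = tp (m' + 1) W * ρ)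
    (x y : Fin d) :
    ∑ h : Fin m' → Fin d, ρ (Fin.cons x h) (Fin.cons y h) =
      if x = y then (1 / (d : ℂ)) else 0 :=
  collective_invariant_marginal_general d m' ρ hρtr hρcomm x y
end
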